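/- arXiv:2202.01864 — 10 statements merged into one kernel-verified Lean document; each statement's English description precedes it below -/
import Mathlib

section
/- Let Z, U, ε_X, ε_Y be independent standard Gaussian random variables and for τ ∈ ℝ define K_τ := U + τ·Z·U + τ·ε_X + ε_Y. If Z is independent of K_τ, then τ = 0. (Consequently, in the SCM X := Z·U + ε_X, Y := X + U + ε_Y, the causal coefficient θ⁰ = 1 is identifiable from the independence restriction Z ⟂⟂ Y − θX, even though it is not identifiable from any moment restriction.) -/
open MeasureTheory ProbabilityTheory

open scoped NNReal ENNReal

/-!
If `Z` is independent of `K_τ`, then `E[Z K_τ²] = E[Z] E[K_τ²] = 0`. On the other hand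
`K_τ = (1 + τZ)U + W` with `W = τε_X + ε_Y` centred and independent of `(Z, U)`, so expanding the
square leaves `E[Z K_τ²] = E[Z(1 + τZ)²] E[U²] = E[Z] + 2τ E[Z²] + τ² E[Z³] = 2τ`, because the odd
moments of a centred Gaussian vanish.
-/

lemma MeasureTheory.MemLp.integrable_pow {Ω : Type*} [MeasurableSpace Ω] {μ : Measure Ω}
    [IsFiniteMeasure μ] {X : Ω → ℝ} {p : ℝ≥0∞} (hX : MemLp X p μ) {n : ℕ} (hn : n ≤ p) :
    Integrable (fun ω ↦ X ω ^ n) μ := by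
  have h := (hX.mono_exponent hn).integrable_norm_pow'
  exact (integrable_norm_iff (hX.1.pow n)).1 (by simpa only [Pi.pow_apply, norm_pow] using h)

section GaussianMoments

variable {m : ℝ} {v : ℝ≥0}

lemma integrable_pow_gaussianReal (n : ℕ) : Integrable (fun x ↦ x ^ n) (gaussianReal m v) :=
  (memLp_id_gaussianReal n).integrable_pow le_rfl

lemma integral_pow_gaussianReal_of_odd {n : ℕ} (hn : Odd n) :
    ∫ x, x ^ n ∂gaussianReal 0 v = 0 := by
  have h : ∫ x, x ^ n ∂gaussianReal 0 v = ∫ x, (-x) ^ n ∂gaussianReal 0 v := by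
    conv_lhs => rw [← neg_zero, ← gaussianReal_map_neg (μ := 0) (v := v)]
    exact integral_map (by fun_prop) (by fun_prop)
  rw [funext fun x ↦ hn.neg_pow x, integral_neg] at h
  linarith

lemma integral_sq_gaussianReal : ∫ x, x ^ 2 ∂gaussianReal 0 v = v := by
  rw [← variance_fun_id_gaussianReal (μ := 0), variance_eq_integral aemeasurable_id']
  simp

lemma integral_mul_one_add_mul_sq_gaussianReal (τ : ℝ) :
    ∫ x, x * (1 + τ * x) ^ 2 ∂gaussianReal 0 v = 2 * τ * v := by
  have hexp : (fun x : ℝ ↦ x * (1 + τ * x) ^ 2)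
      = fun x ↦ x ^ 1 + 2 * τ * x ^ 2 + τ ^ 2 * x ^ 3 := by
    funext x; ring
  have hi := integrable_pow_gaussianReal (m := 0) (v := v)
  rw [hexp, integral_add ((hi 1).fun_add ((hi 2).const_mul _)) ((hi 3).const_mul _),
    integral_add (hi 1) ((hi 2).const_mul _), integral_const_mul, integral_const_mul,
    integral_pow_gaussianReal_of_odd odd_one, integral_sq_gaussianReal,
    integral_pow_gaussianReal_of_odd (by decide)]
  ring

end GaussianMoments

section Model

variable {Ω : Type*} [MeasurableSpace Ω] {μ : Measure Ω}

lemma ProbabilityTheory.HasLaw.memLp_of_gaussianReal {X : Ω → ℝ} {m : ℝ} {v : ℝ≥0}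
    (hX : HasLaw X (gaussianReal m v) μ) {p : ℝ≥0∞} (hp : p ≠ ∞) : MemLp X p μ := by
  have h := memLp_id_gaussianReal' (μ := m) (v := v) p hp
  rw [← hX.map_eq] at h
  exact (memLp_map_measure_iff aestronglyMeasurable_id hX.aemeasurable).1 h

variable [IsProbabilityMeasure μ]

lemma integral_mul_sq_mul_add_eq {Z U W : Ω → ℝ} (hZ : MemLp Z 3 μ) (hU : MemLp U 2 μ)
    (hW : MemLp W 2 μ) (hZU : IndepFun Z U μ) (hZUW : IndepFun (fun ω ↦ (Z ω, U ω)) W μ)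
    (hZ0 : μ[Z] = 0) (hW0 : μ[W] = 0) (τ : ℝ) :
    ∫ ω, Z ω * ((1 + τ * Z ω) * U ω + W ω) ^ 2 ∂μ
      = (∫ ω, Z ω * (1 + τ * Z ω) ^ 2 ∂μ) * ∫ ω, U ω ^ 2 ∂μ := by
  set G : Ω → ℝ := fun ω ↦ Z ω * (1 + τ * Z ω)
  set H : Ω → ℝ := fun ω ↦ Z ω * (1 + τ * Z ω) ^ 2
  have hZn (n : ℕ) (hn : (n : ℝ≥0∞) ≤ 3) := hZ.integrable_pow hn
  have hG : Integrable G μ := by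
    have : G = fun ω ↦ Z ω ^ 1 + τ * Z ω ^ 2 := by funext ω; simp only [G]; ring
    rw [this]
    exact (hZn 1 (by norm_num)).fun_add ((hZn 2 (by norm_num)).const_mul τ)
  have hH : Integrable H μ := by
    have : H = fun ω ↦ Z ω ^ 1 + 2 * τ * Z ω ^ 2 + τ ^ 2 * Z ω ^ 3 := by
      funext ω; simp only [H]; ring
    rw [this]
    exact ((hZn 1 (by norm_num)).fun_add ((hZn 2 (by norm_num)).const_mul _)).fun_add
      ((hZn 3 (by norm_num)).const_mul _)
  have hHU : IndepFun H (fun ω ↦ U ω ^ 2) μ :=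
    hZU.comp (by fun_prop : Measurable fun z : ℝ ↦ z * (1 + τ * z) ^ 2)
      (by fun_prop : Measurable fun u : ℝ ↦ u ^ 2)
  have hGU : IndepFun G U μ :=
    hZU.comp (by fun_prop : Measurable fun z : ℝ ↦ z * (1 + τ * z)) measurable_id
  have hGUW : IndepFun (fun ω ↦ G ω * U ω) W μ :=
    hZUW.comp (by fun_prop : Measurable fun p : ℝ × ℝ ↦ p.1 * (1 + τ * p.1) * p.2) measurable_id
  have hZW : IndepFun Z (fun ω ↦ W ω ^ 2) μ :=
    hZUW.comp measurable_fst (by fun_prop : Measurable fun w : ℝ ↦ w ^ 2)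
  have hHU_int : Integrable (fun ω ↦ H ω * U ω ^ 2) μ :=
    hHU.integrable_mul hH (hU.integrable_pow (by norm_num))
  have hGUW_int : Integrable (fun ω ↦ G ω * U ω * W ω) μ :=
    hGUW.integrable_mul (hGU.integrable_mul hG (hU.integrable one_le_two))
      (hW.integrable one_le_two)
  have hZW_int : Integrable (fun ω ↦ Z ω * W ω ^ 2) μ :=
    hZW.integrable_mul (hZ.integrable (by norm_num)) (hW.integrable_pow le_rfl)
  have hexp : (fun ω ↦ Z ω * ((1 + τ * Z ω) * U ω + W ω) ^ 2)
      = fun ω ↦ H ω * U ω ^ 2 + 2 * (G ω * U ω * W ω) + Z ω * W ω ^ 2 := by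
    funext ω; simp only [G, H]; ring
  rw [hexp, integral_add (hHU_int.fun_add (hGUW_int.const_mul 2)) hZW_int,
    integral_add hHU_int (hGUW_int.const_mul 2), integral_const_mul,
    hHU.integral_fun_mul_eq_mul_integral hH.1 (hU.1.pow 2),
    hGUW.integral_fun_mul_eq_mul_integral (hG.1.mul hU.1) hW.1,
    hZW.integral_fun_mul_eq_mul_integral hZ.1 (hW.1.pow 2), hZ0, hW0]
  ring

lemma integral_mul_sq_residual {Z U εX εY : Ω → ℝ} (lawZ : HasLaw Z (gaussianReal 0 1) μ)
    (lawU : HasLaw U (gaussianReal 0 1) μ) (lawεX : HasLaw εX (gaussianReal 0 1) μ)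
    (lawεY : HasLaw εY (gaussianReal 0 1) μ) (hindep : iIndepFun ![Z, U, εX, εY] μ) (τ : ℝ) :
    ∫ ω, Z ω * (U ω + τ * Z ω * U ω + τ * εX ω + εY ω) ^ 2 ∂μ = 2 * τ := by
  set W : Ω → ℝ := fun ω ↦ τ * εX ω + εY ω
  have hεX := lawεX.memLp_of_gaussianReal (p := 2) (by simp)
  have hεY := lawεY.memLp_of_gaussianReal (p := 2) (by simp)
  have hW : MemLp W 2 μ := (hεX.const_mul τ).add hεY
  have hW0 : μ[W] = 0 := by
    rw [integral_add ((hεX.integrable one_le_two).const_mul τ) (hεY.integrable one_le_two),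
      integral_const_mul, lawεX.integral_eq, lawεY.integral_eq]
    simp
  have hmeas : ∀ i, AEMeasurable (![Z, U, εX, εY] i) μ := fun i ↦ by
    fin_cases i
    exacts [lawZ.aemeasurable, lawU.aemeasurable, lawεX.aemeasurable, lawεY.aemeasurable]
  have hZUW : IndepFun (fun ω ↦ (Z ω, U ω)) W μ :=
    (hindep.indepFun_prodMk_prodMk₀ hmeas 0 1 2 3 (by decide) (by decide) (by decide)
      (by decide)).comp measurable_id (by fun_prop : Measurable fun p : ℝ × ℝ ↦ τ * p.1 + p.2)
  have hZmoment : ∫ ω, Z ω * (1 + τ * Z ω) ^ 2 ∂μ = 2 * τ := by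
    simpa using (lawZ.integral_comp (f := fun x ↦ x * (1 + τ * x) ^ 2) (by fun_prop)).trans
      (integral_mul_one_add_mul_sq_gaussianReal τ)
  have hUmoment : ∫ ω, U ω ^ 2 ∂μ = 1 := by
    simpa using (lawU.integral_comp (f := fun x ↦ x ^ 2) (by fun_prop)).trans
      integral_sq_gaussianReal
  have hK (ω : Ω) : U ω + τ * Z ω * U ω + τ * εX ω + εY ω = (1 + τ * Z ω) * U ω + W ω := by
    simp only [W]; ring
  simp only [hK]
  rw [integral_mul_sq_mul_add_eq (lawZ.memLp_of_gaussianReal (by simp))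
    (lawU.memLp_of_gaussianReal (by simp)) hW
    (hindep.indepFun (by decide : (0 : Fin 4) ≠ 1)) hZUW (by simp [lawZ.integral_eq]) hW0 τ,
    hZmoment, hUmoment, mul_one]

end Model

/-- For independent standard Gaussians `Z, U, ε_X, ε_Y` and
`K_τ := U + τ·Z·U + τ·ε_X + ε_Y`, independence of `Z` and `K_τ` forces `τ = 0`. -/
theorem statement4 {Ω : Type*} [MeasurableSpace Ω] (μ : Measure Ω) [IsProbabilityMeasure μ]
    (Z U εX εY : Ω → ℝ)
    (hZm : Measurable Z) (hUm : Measurable U) (hεXm : Measurable εX) (hεYm : Measurable εY)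
    (hindep : iIndepFun ![Z, U, εX, εY] μ)
    (hZ : Measure.map Z μ = gaussianReal 0 1)
    (hU : Measure.map U μ = gaussianReal 0 1)
    (hεX : Measure.map εX μ = gaussianReal 0 1)
    (hεY : Measure.map εY μ = gaussianReal 0 1)
    (τ : ℝ)
    (hindepK : IndepFun Z (fun ω => U ω + τ * Z ω * U ω + τ * εX ω + εY ω) μ) :
    τ = 0 := by
  have lawZ : HasLaw Z (gaussianReal 0 1) μ := ⟨hZm.aemeasurable, hZ⟩
  have hvanish : ∫ ω, Z ω * (U ω + τ * Z ω * U ω + τ * εX ω + εY ω) ^ 2 ∂μ = 0 := by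
    simpa [lawZ.integral_eq] using
      (hindepK.comp measurable_id (measurable_id.pow_const 2)).integral_fun_mul_eq_mul_integral
        hZm.aestronglyMeasurable (by fun_prop)
  rw [integral_mul_sq_residual lawZ ⟨hUm.aemeasurable, hU⟩ ⟨hεXm.aemeasurable, hεX⟩
    ⟨hεYm.aemeasurable, hεY⟩ hindep τ] at hvanish
  linarith
end

section
/- Let Z be a random variable taking almost surely values in a finite set S ⊆ ℝ^r with |S| = k, let X be an ℝ^d-valued random variable, let φ : ℝ^d → ℝ^p be measurable with φ(X) integrable and p > k, and let η : ℝ^r → ℝ^q be any function such that η(Z)φ(X)ᵀ is entrywise integrable. Then the matrix M := E[η(Z)φ(X)ᵀ] ∈ ℝ^{q×p} has rank at most k; in particular there exists τ ∈ ℝ^p with τ ≠ 0 and M τ = 0, so the moment identifiability condition fails for every choice of η. -/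
/-!
A linear form `c` on `ℝ^q` that vanishes on the finite set `η(S)` vanishes a.s. on `η(Z)`, hence
`cᵀ M = 0` for `M = E[η(Z)φ(X)ᵀ]`. So the kernel of the `|S| × q` matrix `A` with rows `η(s)` is
contained in that of `Mᵀ`, whence `rank M ≤ rank A ≤ |S| = k < p`, and rank–nullity yields a
nonzero `τ` with `M τ = 0`.
-/

open MeasureTheory Matrix

namespace Matrix

variable {K : Type*} [Field K] {l m n : Type*} [Fintype n]

theorem rank_le_rank_of_ker_mulVecLin_le {A : Matrix l n K} {B : Matrix m n K}
    (h : LinearMap.ker A.mulVecLin ≤ LinearMap.ker B.mulVecLin) : B.rank ≤ A.rank := by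
  have hA := LinearMap.finrank_range_add_finrank_ker A.mulVecLin
  have hB := LinearMap.finrank_range_add_finrank_ker B.mulVecLin
  have hker := Submodule.finrank_mono h
  unfold rank
  omega

theorem exists_mulVec_eq_zero_of_rank_lt_card_width {A : Matrix m n K}
    (h : A.rank < Fintype.card n) : ∃ v, v ≠ 0 ∧ A *ᵥ v = 0 := by
  have hker : LinearMap.ker A.mulVecLin ≠ ⊥ := by
    have := LinearMap.finrank_range_add_finrank_ker A.mulVecLin
    rw [Module.finrank_fintype_fun_eq_card] at this
    rw [Ne, ← Submodule.finrank_eq_zero]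
    unfold rank at h
    omega
  obtain ⟨v, hv, hv0⟩ := Submodule.exists_mem_ne_zero_of_ne_bot hker
  exact ⟨v, hv0, hv⟩

end Matrix

/-- The cross-moment matrix `E[f gᵀ]` of two random vectors. -/
noncomputable def crossMoment {Ω ι κ : Type*} [MeasurableSpace Ω] (μ : Measure Ω)
    (f : Ω → ι → ℝ) (g : Ω → κ → ℝ) : Matrix ι κ ℝ :=
  Matrix.of fun i j => ∫ ω, f ω i * g ω j ∂μ

theorem vecMul_crossMoment_eq_zero {Ω ι κ : Type*} [Fintype ι] [MeasurableSpace Ω]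
    {μ : Measure Ω} {f : Ω → ι → ℝ} {g : Ω → κ → ℝ}
    (hfg : ∀ i j, Integrable (fun ω => f ω i * g ω j) μ) {c : ι → ℝ}
    (hc : ∀ᵐ ω ∂μ, c ⬝ᵥ f ω = 0) : c ᵥ* crossMoment μ f g = 0 := by
  funext j
  calc (c ᵥ* crossMoment μ f g) j
      = ∑ i, ∫ ω, c i * (f ω i * g ω j) ∂μ := by
        simp only [vecMul, dotProduct, crossMoment, of_apply, integral_const_mul]
    _ = ∫ ω, (c ⬝ᵥ f ω) * g ω j ∂μ := by
        rw [← integral_finsetSum _ fun i _ => (hfg i j).const_mul (c i)]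
        simp only [dotProduct, Finset.sum_mul, mul_assoc]
    _ = 0 := by
        rw [integral_eq_zero_of_ae]
        filter_upwards [hc] with ω hω
        simp [hω]

theorem statement5_general {Ω : Type*} [MeasurableSpace Ω] (μ : Measure Ω)
    {r d p q k : ℕ} (Z : Ω → (Fin r → ℝ)) (X : Ω → (Fin d → ℝ))
    (S : Finset (Fin r → ℝ)) (hScard : S.card = k)
    (hZS : ∀ᵐ ω ∂μ, Z ω ∈ S)
    (φ : (Fin d → ℝ) → (Fin p → ℝ))
    (hpk : p > k)
    (η : (Fin r → ℝ) → (Fin q → ℝ))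
    (hint : ∀ i j, Integrable (fun ω => η (Z ω) i * φ (X ω) j) μ) :
    (Matrix.of fun i j => ∫ ω, η (Z ω) i * φ (X ω) j ∂μ).rank ≤ k ∧
      ∃ τ : Fin p → ℝ, τ ≠ 0 ∧
        (Matrix.of fun i j => ∫ ω, η (Z ω) i * φ (X ω) j ∂μ).mulVec τ = 0 := by
  change (crossMoment μ (η ∘ Z) (φ ∘ X)).rank ≤ k ∧
    ∃ τ, τ ≠ 0 ∧ crossMoment μ (η ∘ Z) (φ ∘ X) *ᵥ τ = 0
  set M := crossMoment μ (η ∘ Z) (φ ∘ X)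
  let A : Matrix S (Fin q) ℝ := Matrix.of fun s => η s
  have hker : LinearMap.ker A.mulVecLin ≤ LinearMap.ker Mᵀ.mulVecLin := by
    intro c hc
    have hcS : ∀ s ∈ S, c ⬝ᵥ η s = 0 := fun s hs => by
      rw [dotProduct_comm]; exact congrFun hc ⟨s, hs⟩
    rw [LinearMap.mem_ker, mulVecLin_apply, mulVec_transpose]
    exact vecMul_crossMoment_eq_zero hint (hZS.mono fun ω hω => hcS _ hω)
  have hrank : M.rank ≤ k := calc
    M.rank = Mᵀ.rank := (rank_transpose M).symm
    _ ≤ A.rank := rank_le_rank_of_ker_mulVecLin_le hker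
    _ ≤ k := by simpa [hScard] using rank_le_card_height A
  exact ⟨hrank, exists_mulVec_eq_zero_of_rank_lt_card_width (by simpa using hrank.trans_lt hpk)⟩

/-- If the instrument `Z` takes a.s. values in a finite set `S` of cardinality `k`
and `p > k`, then for any `η` the moment matrix `M = E[η(Z)φ(X)ᵀ]` has rank at most `k`; in
particular some `τ ≠ 0` satisfies `Mτ = 0`, so moment identifiability fails. -/
theorem statement5 {Ω : Type*} [MeasurableSpace Ω] (μ : Measure Ω) [IsProbabilityMeasure μ]
    {r d p q k : ℕ} (Z : Ω → (Fin r → ℝ)) (X : Ω → (Fin d → ℝ))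
    (S : Finset (Fin r → ℝ)) (hScard : S.card = k)
    (hZS : ∀ᵐ ω ∂μ, Z ω ∈ S)
    (φ : (Fin d → ℝ) → (Fin p → ℝ)) (hφ : Measurable φ)
    (hφXint : ∀ j, Integrable (fun ω => φ (X ω) j) μ)
    (hpk : p > k)
    (η : (Fin r → ℝ) → (Fin q → ℝ))
    (hint : ∀ i j, Integrable (fun ω => η (Z ω) i * φ (X ω) j) μ) :
    (Matrix.of fun i j => ∫ ω, η (Z ω) i * φ (X ω) j ∂μ).rank ≤ k ∧
      ∃ τ : Fin p → ℝ, τ ≠ 0 ∧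
        (Matrix.of fun i j => ∫ ω, η (Z ω) i * φ (X ω) j ∂μ).mulVec τ = 0 :=
  statement5_general μ Z X S hScard hZS φ hpk η hint
end

section
/- Let U, E, F be independent standard Gaussian random variables and let τ = (τ₁, τ₂, τ₃) ∈ ℝ³. If the random variables Σ_{i=1}^{3} τ_i (U + E)^i + U + F and Σ_{i=1}^{3} τ_i (1 + U + E)^i + U + F have the same distribution, then τ₁ = τ₂ = τ₃ = 0. -/
/-!
Put `W := U + E` and `Z := (U - E) / 2 + F`. The pair `(W, Z)` is Gaussian with zero covariance,
so `W` and `Z` are independent, and `U + F = W / 2 + Z`. Both variables of the hypothesis are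
therefore of the form `φ(W) + Z`, and since the characteristic function of the Gaussian `Z` never
vanishes, `Z` can be cancelled: with `h(w) := τ₁ w + τ₂ w² + τ₃ w³ + w / 2`, the law of `h` under
`N(0, 2)` is the law of `h - 1/2` under `N(1, 2)`. The moments of `N(m, v)` satisfy
`E[x^(n+2)] = m E[x^(n+1)] + (n+1) v E[x^n]` (integration by parts against the density), so the
first three moments of both sides are explicit polynomials in `τ`; the resulting system has
`τ = 0` as its only real solution.
-/

open MeasureTheory ProbabilityTheory Real NNReal

namespace ProbabilityTheory

section GaussianMoments

variable {μ : ℝ} {v : ℝ≥0}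

@[fun_prop]
lemma integrable_pow_gaussianReal (n : ℕ) : Integrable (fun x : ℝ => x ^ n) (gaussianReal μ v) :=
  (memLp_id_gaussianReal n).integrable_norm_pow'.mono' (by fun_prop)
    (ae_of_all _ fun x => by simp)

@[fun_prop]
lemma integrable_fun_id_gaussianReal : Integrable (fun x : ℝ => x) (gaussianReal μ v) := by
  simpa using integrable_pow_gaussianReal (μ := μ) (v := v) 1

lemma integrable_gaussianPDFReal_mul_iff (hv : v ≠ 0) {f : ℝ → ℝ} :
    Integrable (fun x => gaussianPDFReal μ v x * f x) ↔ Integrable f (gaussianReal μ v) := by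
  rw [gaussianReal_of_var_ne_zero _ hv, integrable_withDensity_iff_integrable_smul'
    (measurable_gaussianPDF μ v) (ae_of_all _ fun _ => gaussianPDF_lt_top)]
  simp [toReal_gaussianPDF]

lemma hasDerivAt_gaussianPDFReal (x : ℝ) :
    HasDerivAt (gaussianPDFReal μ v) (-((x - μ) / v) * gaussianPDFReal μ v x) x := by
  have h : HasDerivAt (fun y => -(y - μ) ^ 2 / (2 * v)) (-(2 * (x - μ)) / (2 * v)) x := by
    simpa using (((hasDerivAt_id' x).sub_const μ).pow 2).neg.div_const (2 * (v : ℝ))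
  rw [gaussianPDFReal_def]
  refine (h.exp.const_mul (√(2 * π * v))⁻¹).congr_deriv ?_
  beta_reduce
  ring

lemma integral_pow_gaussianReal_of_two_le {n : ℕ} (hn : 2 ≤ n) :
    ∫ x, x ^ n ∂gaussianReal μ v
      = μ * ∫ x, x ^ (n - 1) ∂gaussianReal μ v
        + (n - 1) * v * ∫ x, x ^ (n - 2) ∂gaussianReal μ v := by
  obtain ⟨n, rfl⟩ := Nat.exists_eq_add_of_le' hn
  rcases eq_or_ne v 0 with rfl | hv
  · simp [pow_succ]
    ring
  have hderiv (x : ℝ) : HasDerivAt (fun x => x ^ (n + 1) * gaussianPDFReal μ v x)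
      (gaussianPDFReal μ v x •
        ((n + 1) * x ^ n + μ / v * x ^ (n + 1) - (v : ℝ)⁻¹ * x ^ (n + 2))) x :=
    ((hasDerivAt_pow (n + 1) x).mul (hasDerivAt_gaussianPDFReal x)).congr_deriv
      (by rw [smul_eq_mul]; push_cast; ring)
  have hint : Integrable (fun x => x ^ (n + 1) * gaussianPDFReal μ v x) := by
    simpa only [mul_comm] using (integrable_gaussianPDFReal_mul_iff hv).2
      (integrable_pow_gaussianReal (μ := μ) (n + 1))
  have h0 := integral_eq_zero_of_hasDerivAt_of_integrable hderiv
    ((integrable_gaussianPDFReal_mul_iff hv).2 (by fun_prop)) hint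
  rw [← integral_gaussianReal_eq_integral_smul hv] at h0
  simp (disch := fun_prop) only [integral_add, integral_sub, integral_const_mul] at h0
  have hv' : (v : ℝ) ≠ 0 := by exact_mod_cast hv
  rw [show n + 2 - 1 = n + 1 by omega, Nat.add_sub_cancel]
  push_cast
  field_simp at h0
  linear_combination -h0

end GaussianMoments

section NoiseCancellation

variable {Ω : Type*} [MeasurableSpace Ω] {P : Measure Ω}

lemma HasGaussianLaw.charFun_map_ne_zero {X : Ω → ℝ} (hX : HasGaussianLaw X P) (t : ℝ) :
    charFun (P.map X) t ≠ 0 := by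
  rw [hX.map_eq_gaussianReal, charFun_gaussianReal]
  exact Complex.exp_ne_zero _

lemma map_eq_map_of_map_add_eq_map_add [IsProbabilityMeasure P] {E : Type*} [NormedAddCommGroup E]
    [InnerProductSpace ℝ E] [CompleteSpace E] [MeasurableSpace E] [BorelSpace E]
    [SecondCountableTopology E] {A B Z : Ω → E} (hA : AEMeasurable A P) (hB : AEMeasurable B P)
    (hZ : AEMeasurable Z P) (hAZ : A ⟂ᵢ[P] Z) (hBZ : B ⟂ᵢ[P] Z)
    (hcharFun : ∀ t, charFun (P.map Z) t ≠ 0)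
    (h : P.map (fun ω => A ω + Z ω) = P.map (fun ω => B ω + Z ω)) : P.map A = P.map B := by
  refine Measure.ext_of_charFun (funext fun t => mul_right_cancel₀ (hcharFun t) ?_)
  have := congr_fun (congrArg charFun h) t
  rwa [hAZ.charFun_map_fun_add_eq_mul hA hZ, hBZ.charFun_map_fun_add_eq_mul hB hZ] at this

variable {U E F : Ω → ℝ}

lemma hasGaussianLaw_add_sub_div_two_add (hind : iIndepFun ![U, E, F] P)
    (hgauss : ∀ i, HasGaussianLaw (![U, E, F] i) P) :
    HasGaussianLaw (fun ω => (U ω + E ω, (U ω - E ω) / 2 + F ω)) P := by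
  let p (i : Fin 3) : (Fin 3 → ℝ) →L[ℝ] ℝ := ContinuousLinearMap.proj i
  simpa [p, div_eq_inv_mul] using (hind.hasGaussianLaw hgauss).map_fun
    ((p 0 + p 1).prod ((2⁻¹ : ℝ) • (p 0 - p 1) + p 2))

lemma indepFun_add_sub_div_two_add [IsProbabilityMeasure P] (hind : iIndepFun ![U, E, F] P)
    (hgauss : ∀ i, HasGaussianLaw (![U, E, F] i) P) (hvar : Var[U; P] = Var[E; P]) :
    IndepFun (fun ω => U ω + E ω) (fun ω => (U ω - E ω) / 2 + F ω) P := by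
  have hU : MemLp U 2 P := by simpa using (hgauss 0).memLp_two
  have hE : MemLp E 2 P := by simpa using (hgauss 1).memLp_two
  have hF : MemLp F 2 P := by simpa using (hgauss 2).memLp_two
  have hUE : IndepFun U E P := by simpa using hind.indepFun (show (0 : Fin 3) ≠ 1 by decide)
  have hUF : IndepFun U F P := by simpa using hind.indepFun (show (0 : Fin 3) ≠ 2 by decide)
  have hEF : IndepFun E F P := by simpa using hind.indepFun (show (1 : Fin 3) ≠ 2 by decide)
  have hD : MemLp (fun ω => (U ω - E ω) / 2) 2 P := by
    simpa [div_eq_inv_mul] using (hU.sub hE).const_mul 2⁻¹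
  refine (hasGaussianLaw_add_sub_div_two_add hind hgauss).indepFun_of_covariance_eq_zero ?_
  have hcov (X : Ω → ℝ) (hX : MemLp X 2 P) :
      cov[X, fun ω => (U ω - E ω) / 2 + F ω; P]
        = (cov[X, U; P] - cov[X, E; P]) / 2 + cov[X, F; P] := by
    rw [← covariance_fun_sub_right hX hU hE, ← covariance_fun_div_right]
    exact covariance_add_right hX hD hF
  calc cov[fun ω => U ω + E ω, fun ω => (U ω - E ω) / 2 + F ω; P]
      = cov[U, fun ω => (U ω - E ω) / 2 + F ω; P] + cov[E, fun ω => (U ω - E ω) / 2 + F ω; P] :=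
        covariance_add_left hU hE (hD.add hF)
    _ = 0 := by
      rw [hcov U hU, hcov E hE, covariance_self hU.aemeasurable, covariance_self hE.aemeasurable,
        covariance_comm E U, hUE.covariance_eq_zero hU hE, hUF.covariance_eq_zero hU hF,
        hEF.covariance_eq_zero hE hF, hvar]
      ring

end NoiseCancellation

end ProbabilityTheory

lemma cubic_system_eq_zero {τ₁ τ₂ τ₃ : ℝ} (h₁ : τ₁ + τ₂ + 7 * τ₃ = 0)
    (h₂ : (13 * τ₃ + 1) * (2 * τ₂ + 3 * τ₃) = 0)
    (h₃ : 4 * τ₂ ^ 2 + 10 * τ₂ * τ₃ + 32 * τ₃ ^ 2 + τ₃ + 88 * τ₂ ^ 2 * τ₃ + 238 * τ₂ * τ₃ ^ 2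
      + 496 * τ₃ ^ 3 = 0) :
    τ₁ = 0 ∧ τ₂ = 0 ∧ τ₃ = 0 := by
  rcases mul_eq_zero.1 h₂ with h | h
  · have hτ₃ : τ₃ = -1 / 13 := by linarith
    subst hτ₃
    nlinarith [sq_nonneg (τ₂ - 3 / 26)]
  · have hτ₂ : τ₂ = -3 / 2 * τ₃ := by linarith
    subst hτ₂
    have hτ₃ : τ₃ = 0 := by
      have : τ₃ * (337 * τ₃ ^ 2 + 26 * τ₃ + 1) = 0 := by linear_combination h₃
      rcases mul_eq_zero.1 this with h' | h'
      · exact h'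
      · nlinarith [sq_nonneg (τ₃ + 13 / 337)]
    subst hτ₃
    exact ⟨by linarith, by ring, rfl⟩

lemma cubic_eq_zero_of_map_gaussianReal_eq {τ₁ τ₂ τ₃ : ℝ}
    (h : (gaussianReal 0 2).map (fun w => τ₁ * w + τ₂ * w ^ 2 + τ₃ * w ^ 3 + w / 2) =
      (gaussianReal 0 2).map
        (fun w => τ₁ * (1 + w) + τ₂ * (1 + w) ^ 2 + τ₃ * (1 + w) ^ 3 + w / 2)) :
    τ₁ = 0 ∧ τ₂ = 0 ∧ τ₃ = 0 := by
  have h' : (gaussianReal 0 2).map (fun w => τ₁ * w + τ₂ * w ^ 2 + τ₃ * w ^ 3 + w / 2) =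
      (gaussianReal 1 2).map (fun w => τ₁ * w + τ₂ * w ^ 2 + τ₃ * w ^ 3 + w / 2 - 1 / 2) := by
    rw [h, ← zero_add (1 : ℝ), ← gaussianReal_map_const_add, Measure.map_map (by fun_prop)
      (by fun_prop)]
    congr with w
    simp only [Function.comp_apply]
    ring
  have hmom (n : ℕ) := ((IdentDistrib.mk (by fun_prop) (by fun_prop) h').comp
    (measurable_id.pow_const n)).integral_eq
  have h₁ := hmom 1
  have h₂ := hmom 2
  have h₃ := hmom 3
  simp only [Function.comp_def, id] at h₁ h₂ h₃
  ring_nf at h₁ h₂ h₃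
  simp (disch := fun_prop) only [integral_add, integral_sub, integral_mul_const,
    integral_const_mul] at h₁ h₂ h₃
  -- the integrand of `∫ a, c * a` is eta-reduced, so the generic `integral_const_mul` misses it
  simp only [integral_pow_gaussianReal_of_two_le, integral_const_mul (f := fun a => a),
    integral_id_gaussianReal, integral_const, probReal_univ, smul_eq_mul, pow_one, pow_zero,
    Nat.reduceLeDiff, Nat.reduceSub, Nat.cast_ofNat, NNReal.coe_ofNat] at h₁ h₂ h₃
  have e₁ : τ₁ + τ₂ + 7 * τ₃ = 0 := by linear_combination -h₁
  -- the second and third moment equations, reduced modulo `e₁`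
  refine cubic_system_eq_zero e₁ ?_ ?_
  · linear_combination (-1 / 2) * h₂ - (12 * τ₃ + 12 * τ₂ + (τ₁ + τ₂ + 7 * τ₃)) / 2 * e₁
  · linear_combination (-1 / 18) * h₃ - (3 / 2 + 84 * τ₃ + 1536 * τ₃ ^ 2 + 6 * τ₂ + 528 * τ₂ * τ₃
      + 186 * τ₂ ^ 2 + (6 + 96 * τ₃ + 18 * τ₂) * (τ₁ + τ₂ + 7 * τ₃)
      + 7 * (τ₁ + τ₂ + 7 * τ₃) ^ 2) / 18 * e₁

/-- For independent standard Gaussians `U, E, F`, if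
`Σ_{i=1}^{3} τ_i (U+E)^i + U + F` and `Σ_{i=1}^{3} τ_i (1+U+E)^i + U + F` have the same
distribution, then `τ₁ = τ₂ = τ₃ = 0`. -/
theorem statement7 {Ω : Type*} [MeasurableSpace Ω] (μ : Measure Ω) [IsProbabilityMeasure μ]
    (U E F : Ω → ℝ)
    (hUm : Measurable U) (hEm : Measurable E) (hFm : Measurable F)
    (hindep : iIndepFun ![U, E, F] μ)
    (hU : Measure.map U μ = gaussianReal 0 1)
    (hE : Measure.map E μ = gaussianReal 0 1)
    (hF : Measure.map F μ = gaussianReal 0 1)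
    (τ₁ τ₂ τ₃ : ℝ)
    (hdist :
      Measure.map (fun ω =>
        τ₁ * (U ω + E ω) + τ₂ * (U ω + E ω) ^ 2 + τ₃ * (U ω + E ω) ^ 3 + U ω + F ω) μ =
      Measure.map (fun ω =>
        τ₁ * (1 + U ω + E ω) + τ₂ * (1 + U ω + E ω) ^ 2 + τ₃ * (1 + U ω + E ω) ^ 3
          + U ω + F ω) μ) :
    τ₁ = 0 ∧ τ₂ = 0 ∧ τ₃ = 0 := by
  have hgauss : ∀ i, HasGaussianLaw (![U, E, F] i) μ := by
    intro i
    fin_cases i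
    · exact HasLaw.hasGaussianLaw ⟨hUm.aemeasurable, hU⟩
    · exact HasLaw.hasGaussianLaw ⟨hEm.aemeasurable, hE⟩
    · exact HasLaw.hasGaussianLaw ⟨hFm.aemeasurable, hF⟩
  have hUE : IndepFun U E μ := by simpa using hindep.indepFun (show (0 : Fin 3) ≠ 1 by decide)
  have hW : μ.map (fun ω => U ω + E ω) = gaussianReal 0 2 := by
    rw [show (fun ω => U ω + E ω) = U + E from rfl,
      gaussianReal_add_gaussianReal_of_indepFun hUE hU hE]
    norm_num
  have hWZ := indepFun_add_sub_div_two_add hindep hgauss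
    (IdentDistrib.variance_eq ⟨hUm.aemeasurable, hEm.aemeasurable, hU.trans hE.symm⟩)
  have hA : Measurable fun w => τ₁ * w + τ₂ * w ^ 2 + τ₃ * w ^ 3 + w / 2 := by fun_prop
  have hB : Measurable fun w => τ₁ * (1 + w) + τ₂ * (1 + w) ^ 2 + τ₃ * (1 + w) ^ 3 + w / 2 := by
    fun_prop
  have hlaw := map_eq_map_of_map_add_eq_map_add (by fun_prop) (by fun_prop) (by fun_prop)
    (hWZ.comp hA measurable_id) (hWZ.comp hB measurable_id)
    (hasGaussianLaw_add_sub_div_two_add hindep hgauss).snd.charFun_map_ne_zero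
    (by convert hdist using 3 with ω ω <;> simp only [Function.comp_apply, id] <;> ring)
  have hpush {f : ℝ → ℝ} (hf : Measurable f) :
      μ.map (fun ω => f (U ω + E ω)) = (gaussianReal 0 2).map f := by
    rw [← hW, Measure.map_map hf (by fun_prop)]
    rfl
  exact cubic_eq_zero_of_map_gaussianReal_eq ((hpush hA).symm.trans (hlaw.trans (hpush hB)))
end

section
/- Let Z be Bernoulli(1/2)-distributed and let U, ε_X be standard Gaussian, with Z, U, ε_X jointly independent, and set X := 2·Z·U − U + ε_X. Then Z and X are independent; in particular, Z is independent of τ·X for every τ ∈ ℝ. (Conditionally on Z = 1, X = U + ε_X, and conditionally on Z = 0, X = −U + ε_X; both are N(0,2).) -/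
/-!
Given `Z`, the variable `X = (2Z − 1)U + ε_X` is a measurable function of `Z` and the pair
`(U, ε_X)`, which is independent of `Z`; so `Z` and `X` are independent as soon as the law of
`(2z − 1)U + ε_X` does not depend on `z` for almost every value `z` of `Z`. Since `Z ∈ {0, 1}`
almost surely, this law is that of `±U + ε_X`, and the two agree because `U` is symmetric and
independent of `ε_X`.
-/

open MeasureTheory ProbabilityTheory

section
variable {Ω α β γ : Type*} [MeasurableSpace Ω] [MeasurableSpace α] [MeasurableSpace β]
  [MeasurableSpace γ] {μ : Measure Ω} {Z : Ω → α} {Y : Ω → β} {f : α → β → γ}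

theorem measure_preimage_inter_preimage_eq_mul_of_ae_map_eq [IsFiniteMeasure μ]
    (hZ : Measurable Z) (hY : Measurable Y) (hf : Measurable (Function.uncurry f))
    (hZY : IndepFun Z Y μ) {ν : Measure γ} (hν : ∀ᵐ z ∂μ.map Z, (μ.map Y).map (f z) = ν)
    {s : Set α} {t : Set γ} (hs : MeasurableSet s) (ht : MeasurableSet t) :
    μ (Z ⁻¹' s ∩ (fun ω ↦ f (Z ω) (Y ω)) ⁻¹' t) = μ (Z ⁻¹' s) * ν t := by
  have hE : MeasurableSet {p : α × β | p.1 ∈ s ∧ f p.1 p.2 ∈ t} :=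
    (measurable_fst hs).inter (hf ht)
  calc μ (Z ⁻¹' s ∩ (fun ω ↦ f (Z ω) (Y ω)) ⁻¹' t)
      = μ.map (fun ω ↦ (Z ω, Y ω)) {p | p.1 ∈ s ∧ f p.1 p.2 ∈ t} :=
        (Measure.map_apply (hZ.prodMk hY) hE).symm
    _ = ∫⁻ z, s.indicator (fun z ↦ (μ.map Y) (f z ⁻¹' t)) z ∂μ.map Z := by
        rw [(indepFun_iff_map_prod_eq_prod_map_map hZ.aemeasurable hY.aemeasurable).mp hZY,
          Measure.prod_apply hE]
        congr 1 with z
        by_cases hz : z ∈ s <;> simp [hz, Set.preimage]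
    _ = ∫⁻ z in s, ν t ∂μ.map Z := by
        rw [lintegral_indicator hs]
        refine setLIntegral_congr_fun_ae hs (hν.mono fun z hz _ ↦ ?_)
        rw [← hz, Measure.map_apply hf.of_uncurry_left ht]
    _ = μ (Z ⁻¹' s) * ν t := by
        rw [setLIntegral_const, Measure.map_apply hZ hs, mul_comm]

theorem indepFun_of_ae_map_eq [IsProbabilityMeasure μ]
    (hZ : Measurable Z) (hY : Measurable Y) (hf : Measurable (Function.uncurry f))
    (hZY : IndepFun Z Y μ) {ν : Measure γ} (hν : ∀ᵐ z ∂μ.map Z, (μ.map Y).map (f z) = ν) :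
    IndepFun Z (fun ω ↦ f (Z ω) (Y ω)) μ := by
  rw [indepFun_iff_measure_inter_preimage_eq_mul]
  intro s t hs ht
  have hX := measure_preimage_inter_preimage_eq_mul_of_ae_map_eq hZ hY hf hZY hν
    MeasurableSet.univ ht
  rw [Set.preimage_univ, Set.univ_inter, measure_univ, one_mul] at hX
  rw [hX]
  exact measure_preimage_inter_preimage_eq_mul_of_ae_map_eq hZ hY hf hZY hν hs ht
end

theorem MeasureTheory.Measure.map_comp_prodMap_id_of_map_eq {α β γ : Type*} [MeasurableSpace α]
    [MeasurableSpace β] [MeasurableSpace γ] {ρ : Measure α} {κ : Measure β} [SFinite ρ]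
    [SFinite κ] {g : α → α} {h : α × β → γ} (hg : Measurable g) (hh : Measurable h)
    (hρ : ρ.map g = ρ) : (ρ.prod κ).map (h ∘ Prod.map g id) = (ρ.prod κ).map h := by
  rw [← Measure.map_map hh (hg.prodMap measurable_id), ← Measure.map_prod_map _ _ hg measurable_id,
    hρ, Measure.map_id]

theorem ae_map_eq_zero_or_eq_one {Ω : Type*} [MeasurableSpace Ω] {μ : Measure Ω}
    [IsProbabilityMeasure μ] {Z : Ω → ℝ} (hZ : Measurable Z)
    (hZ1 : μ {ω | Z ω = 1} = 1/2) (hZ0 : μ {ω | Z ω = 0} = 1/2) :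
    ∀ᵐ z ∂μ.map Z, z = 0 ∨ z = 1 := by
  have h01 : MeasurableSet {z : ℝ | z = 0 ∨ z = 1} :=
    (measurableSet_singleton 0).union (measurableSet_singleton 1)
  have hdisj : Disjoint {ω | Z ω = 0} {ω | Z ω = 1} :=
    Set.disjoint_left.mpr fun ω (h0 : Z ω = 0) (h1 : Z ω = 1) ↦ zero_ne_one (h0.symm.trans h1)
  rw [ae_iff_measure_eq h01.nullMeasurableSet, Measure.map_apply hZ h01,
    Measure.map_apply hZ .univ, Set.preimage_univ, measure_univ]
  change μ ({ω | Z ω = 0} ∪ {ω | Z ω = 1}) = 1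
  rw [measure_union hdisj (hZ (measurableSet_singleton 1)), hZ0, hZ1, ENNReal.add_halves]

theorem statement9_general {Ω : Type*} [MeasurableSpace Ω] (μ : Measure Ω) [IsProbabilityMeasure μ]
    (Z U εX : Ω → ℝ)
    (hZm : Measurable Z) (hUm : Measurable U) (hεXm : Measurable εX)
    (hindep : iIndepFun ![Z, U, εX] μ)
    (hZ1 : μ {ω | Z ω = 1} = 1/2) (hZ0 : μ {ω | Z ω = 0} = 1/2)
    (hU : Measure.map U μ = gaussianReal 0 1) :
    IndepFun Z (fun ω => 2 * Z ω * U ω - U ω + εX ω) μ ∧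
      ∀ τ : ℝ, IndepFun Z (fun ω => τ * (2 * Z ω * U ω - U ω + εX ω)) μ := by
  have hmeas : ∀ i, Measurable (![Z, U, εX] i) := by
    intro i; fin_cases i <;> assumption
  have hZY : IndepFun Z (fun ω ↦ (U ω, εX ω)) μ :=
    (hindep.indepFun_prodMk hmeas 1 2 0 (by decide) (by decide)).symm
  have hY : μ.map (fun ω ↦ (U ω, εX ω)) = (μ.map U).prod (μ.map εX) :=
    (indepFun_iff_map_prod_eq_prod_map_map hUm.aemeasurable hεXm.aemeasurable).mp
      (hindep.indepFun (i := 1) (j := 2) (by decide))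
  have hUsymm : (μ.map U).map Neg.neg = μ.map U := by
    rw [hU, gaussianReal_map_neg, neg_zero]
  have hX : IndepFun Z (fun ω => 2 * Z ω * U ω - U ω + εX ω) μ := by
    refine indepFun_of_ae_map_eq (f := fun z p ↦ 2 * z * p.1 - p.1 + p.2) hZm
      (hUm.prodMk hεXm) (by fun_prop) hZY
      (ν := (μ.map fun ω ↦ (U ω, εX ω)).map fun p ↦ p.1 + p.2) ?_
    filter_upwards [ae_map_eq_zero_or_eq_one hZm hZ1 hZ0] with z hz
    rcases hz with rfl | rfl
    · rw [hY, ← Measure.map_comp_prodMap_id_of_map_eq measurable_neg (by fun_prop) hUsymm]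
      congr 1 with p
      simp only [Function.comp_apply, Prod.map_fst, Prod.map_snd, id]
      ring
    · congr 1 with p
      ring
  exact ⟨hX, fun τ ↦ hX.comp measurable_id (measurable_const_mul τ)⟩

/-- With `Z ~ Bernoulli(1/2)`, `U, ε_X` standard Gaussian, all jointly
independent, and `X := 2·Z·U − U + ε_X`: `Z` and `X` are independent, and in particular `Z`
is independent of `τ·X` for every `τ`. -/
theorem statement9 {Ω : Type*} [MeasurableSpace Ω] (μ : Measure Ω) [IsProbabilityMeasure μ]
    (Z U εX : Ω → ℝ)
    (hZm : Measurable Z) (hUm : Measurable U) (hεXm : Measurable εX)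
    (hindep : iIndepFun ![Z, U, εX] μ)
    (hZ1 : μ {ω | Z ω = 1} = 1/2) (hZ0 : μ {ω | Z ω = 0} = 1/2)
    (hU : Measure.map U μ = gaussianReal 0 1)
    (hεX : Measure.map εX μ = gaussianReal 0 1) :
    IndepFun Z (fun ω => 2 * Z ω * U ω - U ω + εX ω) μ ∧
      ∀ τ : ℝ, IndepFun Z (fun ω => τ * (2 * Z ω * U ω - U ω + εX ω)) μ :=
  statement9_general μ Z U εX hZm hUm hεXm hindep hZ1 hZ0 hU
end

section
/- Let Z be Bernoulli(1/2)-distributed and let U, ε_X, ε_Y be standard Gaussian, with Z, U, ε_X, ε_Y jointly independent, and for τ ∈ ℝ define K_τ := U + ε_Y + τ·(2·Z·U − U + ε_X). Then E[K_τ² | Z = 1] = 2τ² + 2τ + 2 and E[K_τ² | Z = 0] = 2τ² − 2τ + 2; consequently, if Z is independent of K_τ then τ = 0. (Hence in the SCM X := 2ZU − U + ε_X, Y := X + U + ε_Y, the causal coefficient is identifiable from the independence restriction even though Z is independent of X.) -/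
/-!
On `{Z = z}` the variable `K_τ` equals `a U + τ ε_X + ε_Y` with `a = 1 + τ (2z - 1)`, a
variable independent of `Z`. Conditioning on `{Z = z}` therefore leaves its law unchanged: it is
the centred Gaussian of variance `a² + τ² + 1`, whose second moment is `2τ² ± 2τ + 2` for
`z = 1, 0`. If `Z` were independent of `K_τ`, both conditional laws of `K_τ` would equal its law,
so these two second moments would agree, which forces `τ = 0`.
-/

open MeasureTheory ProbabilityTheory
open scoped NNReal

namespace ProbabilityTheory

variable {Ω : Type*} [MeasurableSpace Ω] {μ : Measure Ω}

lemma IndepFun.hasLaw_add_gaussianReal {X Y : Ω → ℝ} {m₁ m₂ : ℝ} {v₁ v₂ : ℝ≥0}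
    (hX : HasLaw X (gaussianReal m₁ v₁) μ) (hY : HasLaw Y (gaussianReal m₂ v₂) μ)
    (hXY : IndepFun X Y μ) : HasLaw (X + Y) (gaussianReal (m₁ + m₂) (v₁ + v₂)) μ := by
  rw [← gaussianReal_conv_gaussianReal]
  exact hXY.hasLaw_add hX hY

lemma iIndepFun.hasLaw_sum_gaussianReal [IsProbabilityMeasure μ] {ι : Type*} {Y : ι → Ω → ℝ}
    {m : ι → ℝ} {v : ι → ℝ≥0} (h : iIndepFun Y μ)
    (hY : ∀ i, HasLaw (Y i) (gaussianReal (m i) (v i)) μ) (s : Finset ι) :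
    HasLaw (∑ i ∈ s, Y i) (gaussianReal (∑ i ∈ s, m i) (∑ i ∈ s, v i)) μ := by
  classical
  induction s using Finset.induction_on with
  | empty =>
    simpa [gaussianReal_zero_var] using
      hasLaw_dirac_of_ae_eq (P := μ) (X := 0) (x := (0 : ℝ)) (by rfl)
  | insert j s hj ih =>
    simp only [Finset.sum_insert hj]
    rw [add_comm (Y j), add_comm (m j), add_comm (v j)]
    exact (h.indepFun_finsetSum_of_notMem₀ (fun i ↦ (hY i).aemeasurable) hj).hasLaw_add_gaussianReal
      ih (hY j)

lemma iIndepFun.hasLaw_sum_const_mul_gaussianReal [IsProbabilityMeasure μ] {ι : Type*}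
    [Fintype ι] {X : ι → Ω → ℝ} (h : iIndepFun X μ) (hX : ∀ i, HasLaw (X i) (gaussianReal 0 1) μ)
    (c : ι → ℝ) :
    HasLaw (fun ω ↦ ∑ i, c i * X i ω) (gaussianReal 0 (.mk (∑ i, c i ^ 2) (by positivity))) μ := by
  have hsum := (h.comp (fun i x ↦ c i * x) fun i ↦ by fun_prop).hasLaw_sum_gaussianReal
    (fun i ↦ gaussianReal_const_mul (hX i) (c i)) Finset.univ
  have hmean : ∑ i, c i * 0 = 0 := by simp
  have hvar : ∑ i, NNReal.mk (c i ^ 2) (sq_nonneg _) * 1 = .mk (∑ i, c i ^ 2) (by positivity) := by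
    ext; simp
  rw [hmean, hvar] at hsum
  exact hsum.congr (ae_of_all _ fun ω ↦ by simp)

lemma HasLaw.integral_sq_of_gaussianReal {X : Ω → ℝ} {m : ℝ} {v : ℝ≥0}
    (hX : HasLaw X (gaussianReal m v) μ) : ∫ ω, X ω ^ 2 ∂μ = v + m ^ 2 := by
  have hvar := variance_eq_sub (memLp_id_gaussianReal (μ := m) (v := v) 2)
  simp only [variance_id_gaussianReal, Pi.pow_apply, id, integral_id_gaussianReal] at hvar
  have h := hX.integral_comp (f := fun x ↦ x ^ 2) (by fun_prop)
  simp only [Function.comp_def] at h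
  linarith

lemma IndepFun.hasLaw_cond_preimage [IsFiniteMeasure μ] {α β : Type*} [MeasurableSpace α]
    [MeasurableSpace β] {X : Ω → α} {Y : Ω → β} {ν : Measure β} (hXY : IndepFun X Y μ)
    (hY : HasLaw Y ν μ) (hX : Measurable X) {A : Set α} (hA : MeasurableSet A)
    (hμA : μ (X ⁻¹' A) ≠ 0) : HasLaw Y ν μ[|X ⁻¹' A] where
  aemeasurable := hY.aemeasurable.mono_ac cond_absolutelyContinuous
  map_eq := by
    ext t ht
    rw [← hY.map_eq,
      Measure.map_apply_of_aemeasurable (hY.aemeasurable.mono_ac cond_absolutelyContinuous) ht,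
      Measure.map_apply_of_aemeasurable hY.aemeasurable ht, cond_apply (hX hA),
      hXY.measure_inter_preimage_eq_mul _ _ hA ht, ← mul_assoc,
      ENNReal.inv_mul_cancel hμA (measure_ne_top _ _), one_mul]

lemma IndepFun.integral_comp_cond_preimage [IsFiniteMeasure μ] {α β E : Type*}
    [MeasurableSpace α] [MeasurableSpace β] [NormedAddCommGroup E] [NormedSpace ℝ E]
    {X : Ω → α} {Y : Ω → β} (hXY : IndepFun X Y μ) (hX : Measurable X) (hY : AEMeasurable Y μ)
    {f : β → E} (hf : AEStronglyMeasurable f (μ.map Y)) {A : Set α} (hA : MeasurableSet A)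
    (hμA : μ (X ⁻¹' A) ≠ 0) : ∫ ω, f (Y ω) ∂μ[|X ⁻¹' A] = ∫ ω, f (Y ω) ∂μ := by
  have hlaw : HasLaw Y (μ.map Y) μ := ⟨hY, rfl⟩
  exact ((hXY.hasLaw_cond_preimage hlaw hX hA hμA).integral_comp hf).trans
    (hlaw.integral_comp hf).symm

lemma integral_sq_cond_eq_of_gaussianReal [IsFiniteMeasure μ] {Z K W : Ω → ℝ} {z : ℝ}
    {v : ℝ≥0} (hZ : Measurable Z) (hZW : IndepFun Z W μ) (hW : HasLaw W (gaussianReal 0 v) μ)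
    (hKW : ∀ ω, Z ω = z → K ω = W ω) (hz : μ {ω | Z ω = z} ≠ 0) :
    ∫ ω, K ω ^ 2 ∂μ[|{ω | Z ω = z}] = v := by
  calc ∫ ω, K ω ^ 2 ∂μ[|{ω | Z ω = z}]
      = ∫ ω, W ω ^ 2 ∂μ[|{ω | Z ω = z}] := integral_congr_ae <| by
        filter_upwards [ae_cond_mem (hZ (measurableSet_singleton z))] with ω hω
        rw [hKW ω hω]
    _ = ∫ ω, W ω ^ 2 ∂μ := hZW.integral_comp_cond_preimage (f := (· ^ 2)) hZ hW.aemeasurable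
        (by fun_prop) (measurableSet_singleton z) hz
    _ = v := by simp [hW.integral_sq_of_gaussianReal]

variable {Z X Y V : Ω → ℝ}

lemma iIndepFun.indepFun_head_const_mul_add_const_mul_add (h : iIndepFun ![Z, X, Y, V] μ)
    (hm : ∀ i, Measurable (![Z, X, Y, V] i)) (a b : ℝ) :
    IndepFun Z (fun ω ↦ a * X ω + b * Y ω + V ω) μ := by
  simpa [Function.comp_def] using (h.indepFun_finset {0} {1, 2, 3} (by decide) hm).comp
    (measurable_pi_apply ⟨0, by decide⟩)
    (show Measurable fun v : ({1, 2, 3} : Finset (Fin 4)) → ℝ ↦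
      a * v ⟨1, by decide⟩ + b * v ⟨2, by decide⟩ + v ⟨3, by decide⟩ by fun_prop)

lemma iIndepFun.hasLaw_tail_const_mul_add_const_mul_add [IsProbabilityMeasure μ]
    (h : iIndepFun ![Z, X, Y, V] μ) (hX : HasLaw X (gaussianReal 0 1) μ)
    (hY : HasLaw Y (gaussianReal 0 1) μ) (hV : HasLaw V (gaussianReal 0 1) μ) (a b : ℝ) :
    HasLaw (fun ω ↦ a * X ω + b * Y ω + V ω)
      (gaussianReal 0 (.mk (a ^ 2 + b ^ 2 + 1) (by positivity))) μ := by
  have hgauss : ∀ i, HasLaw (![X, Y, V] i) (gaussianReal 0 1) μ := by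
    intro i; fin_cases i
    exacts [hX, hY, hV]
  simpa [Fin.sum_univ_three] using
    (h.precomp (g := Fin.succ) (Fin.succ_injective 3)).hasLaw_sum_const_mul_gaussianReal
      hgauss ![a, b, 1]

end ProbabilityTheory

/-- With `Z ~ Bernoulli(1/2)`, `U, ε_X, ε_Y` standard Gaussian, all jointly
independent, and `K_τ := U + ε_Y + τ·(2·Z·U − U + ε_X)`:
`E[K_τ² | Z = 1] = 2τ² + 2τ + 2`, `E[K_τ² | Z = 0] = 2τ² − 2τ + 2`, and independence of `Z`
and `K_τ` forces `τ = 0`. -/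
theorem statement10 {Ω : Type*} [MeasurableSpace Ω] (μ : Measure Ω) [IsProbabilityMeasure μ]
    (Z U εX εY : Ω → ℝ)
    (hZm : Measurable Z) (hUm : Measurable U) (hεXm : Measurable εX) (hεYm : Measurable εY)
    (hindep : iIndepFun ![Z, U, εX, εY] μ)
    (hZ1 : μ {ω | Z ω = 1} = 1/2) (hZ0 : μ {ω | Z ω = 0} = 1/2)
    (hU : Measure.map U μ = gaussianReal 0 1)
    (hεX : Measure.map εX μ = gaussianReal 0 1)
    (hεY : Measure.map εY μ = gaussianReal 0 1)
    (τ : ℝ) :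
    (∫ ω, (U ω + εY ω + τ * (2 * Z ω * U ω - U ω + εX ω)) ^ 2
        ∂(μ[|{ω | Z ω = 1}])) = 2 * τ ^ 2 + 2 * τ + 2 ∧
      (∫ ω, (U ω + εY ω + τ * (2 * Z ω * U ω - U ω + εX ω)) ^ 2
        ∂(μ[|{ω | Z ω = 0}])) = 2 * τ ^ 2 - 2 * τ + 2 ∧
      (IndepFun Z (fun ω => U ω + εY ω + τ * (2 * Z ω * U ω - U ω + εX ω)) μ → τ = 0) := by
  set K : Ω → ℝ := fun ω ↦ U ω + εY ω + τ * (2 * Z ω * U ω - U ω + εX ω) with hK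
  have hmeas : ∀ i, Measurable (![Z, U, εX, εY] i) := by
    intro i; fin_cases i <;> assumption
  have hcond (z : ℝ) (hz : μ {ω | Z ω = z} ≠ 0) :
      ∫ ω, K ω ^ 2 ∂μ[|{ω | Z ω = z}] = (1 + τ * (2 * z - 1)) ^ 2 + τ ^ 2 + 1 := by
    simpa using integral_sq_cond_eq_of_gaussianReal hZm
      (hindep.indepFun_head_const_mul_add_const_mul_add hmeas (1 + τ * (2 * z - 1)) τ)
      (hindep.hasLaw_tail_const_mul_add_const_mul_add ⟨hUm.aemeasurable, hU⟩
        ⟨hεXm.aemeasurable, hεX⟩ ⟨hεYm.aemeasurable, hεY⟩ _ τ)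
      (fun ω hω ↦ by simp only [hK, hω]; ring) hz
  have hZ1' : μ {ω | Z ω = 1} ≠ 0 := by simp [hZ1]
  have hZ0' : μ {ω | Z ω = 0} ≠ 0 := by simp [hZ0]
  refine ⟨by rw [hcond 1 hZ1']; ring, by rw [hcond 0 hZ0']; ring, fun hZK ↦ ?_⟩
  have hK_cond (z : ℝ) (hz : μ {ω | Z ω = z} ≠ 0) :
      ∫ ω, K ω ^ 2 ∂μ[|{ω | Z ω = z}] = ∫ ω, K ω ^ 2 ∂μ :=
    hZK.integral_comp_cond_preimage (f := (· ^ 2)) hZm (by fun_prop) (by fun_prop)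
      (measurableSet_singleton z) hz
  have h10 := (hcond 1 hZ1').symm.trans ((hK_cond 1 hZ1').trans (hK_cond 0 hZ0').symm)
  linarith [h10.trans (hcond 0 hZ0')]
end

section
/- Let Z be Bernoulli(1/2)-distributed and let U, ε_X, ε_Y be standard Gaussian, with Z, U, ε_X, ε_Y jointly independent, and set X := 2·Z·U + ε_X. Then Z is independent of X − U + ε_Y. (Conditionally on Z = 1 this variable equals U + ε_X + ε_Y and conditionally on Z = 0 it equals −U + ε_X + ε_Y; both are N(0,3). Hence in the model Y := X − U + ε_Y the independence identifiability condition fails at τ = 1.) -/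
/-!
The variable is `(2Z - 1)·U + S` with `S = ε_X + ε_Y`. Since `Z ∈ {0, 1}` almost surely, the
factor `2Z - 1` is `±1`, and as `U` is a centred Gaussian independent of `(Z, S)`, the law of
`(2z - 1)·U + S` is the same for both values `z` of `Z`. A function of `(Z, Y)` with `Y`
independent of `Z`, whose law for fixed `Z = z` does not depend on `z`, is independent of `Z`.
-/

open MeasureTheory ProbabilityTheory Function NNReal

namespace MeasureTheory.Measure

variable {α β γ : Type*} [MeasurableSpace α] [MeasurableSpace β] [MeasurableSpace γ]

theorem map_prodMk_eq_prod_of_ae_map_eq {μ : Measure α} [SigmaFinite μ] {ν : Measure β}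
    [SFinite ν] {ρ : Measure γ} [SigmaFinite ρ] {f : α → β → γ} (hf : Measurable (uncurry f))
    (h : ∀ᵐ x ∂μ, ν.map (f x) = ρ) :
    (μ.prod ν).map (fun p => (p.1, f p.1 p.2)) = μ.prod ρ := by
  have hfx (x : α) : Measurable (f x) := hf.comp measurable_prodMk_left
  have hg : Measurable fun p : α × β => (p.1, f p.1 p.2) := measurable_fst.prodMk hf
  refine (prod_eq fun s t hs ht => ?_).symm
  have hslice (x : α) : ν (Prod.mk x ⁻¹' ((fun p : α × β => (p.1, f p.1 p.2)) ⁻¹' s ×ˢ t))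
      = s.indicator (fun x => ν.map (f x) t) x := by
    by_cases hx : x ∈ s <;> simp [hx, map_apply (hfx x) ht, Set.preimage, Set.mem_prod]
  calc (μ.prod ν).map (fun p => (p.1, f p.1 p.2)) (s ×ˢ t)
      = ∫⁻ x in s, ν.map (f x) t ∂μ := by
        rw [map_apply hg (hs.prod ht), prod_apply (hg (hs.prod ht)), ← lintegral_indicator hs]
        simp_rw [hslice]
    _ = ∫⁻ _ in s, ρ t ∂μ := setLIntegral_congr_fun_ae hs (h.mono fun x hx _ => by rw [hx])
    _ = μ s * ρ t := by rw [setLIntegral_const, mul_comm]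

end MeasureTheory.Measure

namespace ProbabilityTheory

variable {Ω α β γ : Type*} [MeasurableSpace Ω] [MeasurableSpace α] [MeasurableSpace β]
  [MeasurableSpace γ] {μ : Measure Ω} [IsProbabilityMeasure μ]

theorem IndepFun.indepFun_comp_of_ae_map_eq {X : Ω → α} {Y : Ω → β} (hXY : IndepFun X Y μ)
    (hX : Measurable X) (hY : Measurable Y) {f : α → β → γ} (hf : Measurable (uncurry f))
    {ρ : Measure γ} (h : ∀ᵐ x ∂μ.map X, (μ.map Y).map (f x) = ρ) :
    IndepFun X (fun ω => f (X ω) (Y ω)) μ := by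
  have hW : Measurable fun ω => f (X ω) (Y ω) := hf.comp (hX.prodMk hY)
  have : IsProbabilityMeasure (μ.map X) := Measure.isProbabilityMeasure_map hX.aemeasurable
  have : IsProbabilityMeasure (μ.map Y) := Measure.isProbabilityMeasure_map hY.aemeasurable
  have : IsProbabilityMeasure ρ := by
    obtain ⟨x, rfl⟩ := h.exists
    exact Measure.isProbabilityMeasure_map (hf.comp measurable_prodMk_left).aemeasurable
  have hg : Measurable fun p : α × β => (p.1, f p.1 p.2) := measurable_fst.prodMk hf
  have hjoint : μ.map (fun ω => (X ω, f (X ω) (Y ω))) = (μ.map X).prod ρ := by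
    rw [← Measure.map_prodMk_eq_prod_of_ae_map_eq hf h,
      ← (indepFun_iff_map_prod_eq_prod_map_map hX.aemeasurable hY.aemeasurable).1 hXY,
      Measure.map_map hg (hX.prodMk hY)]
    rfl
  have hlaw : μ.map (fun ω => f (X ω) (Y ω)) = ρ := by
    have := congrArg (Measure.map Prod.snd) hjoint
    rwa [Measure.map_map measurable_snd (hX.prodMk hW),
      Measure.map_snd_prod, measure_univ, one_smul] at this
  rwa [indepFun_iff_map_prod_eq_prod_map_map hX.aemeasurable hW.aemeasurable, hlaw]

theorem ae_map_eq_or_eq [MeasurableSingletonClass α] {X : Ω → α} (hX : Measurable X) {a b : α}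
    (hab : a ≠ b) (h : μ {ω | X ω = a} + μ {ω | X ω = b} = 1) :
    ∀ᵐ x ∂μ.map X, x = a ∨ x = b := by
  have hpair : MeasurableSet {x : α | x = a ∨ x = b} :=
    (measurableSet_singleton a).union (measurableSet_singleton b)
  rw [ae_map_iff hX.aemeasurable hpair]
  have ha : MeasurableSet {ω | X ω = a} := hX (measurableSet_singleton a)
  have hb : MeasurableSet {ω | X ω = b} := hX (measurableSet_singleton b)
  have hdisj : Disjoint {ω | X ω = a} {ω | X ω = b} :=
    Set.disjoint_left.2 fun ω ha hb => hab (ha.symm.trans hb)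
  have hab_m : MeasurableSet {ω | X ω = a ∨ X ω = b} := ha.union hb
  rw [ae_iff_measure_eq hab_m.nullMeasurableSet, Set.ofPred_or, measure_union hdisj hb, h,
    measure_univ]

theorem gaussianReal_prod_map_const_mul_add {v : ℝ≥0} (ν : Measure ℝ) [SFinite ν] {c : ℝ}
    (hc : c ^ 2 = 1) :
    ((gaussianReal 0 v).prod ν).map (fun p => c * p.1 + p.2)
      = ((gaussianReal 0 v).prod ν).map (fun p => p.1 + p.2) := by
  have hsymm : (gaussianReal 0 v).map (c * ·) = gaussianReal 0 v := by
    rw [gaussianReal_map_const_mul]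
    simp [hc]
  conv_rhs => rw [← hsymm, ← Measure.map_id (μ := ν),
    Measure.map_prod_map _ _ (measurable_const_mul c) measurable_id,
    Measure.map_map (by fun_prop) (by fun_prop)]
  rfl

end ProbabilityTheory

theorem statement11_general {Ω : Type*} [MeasurableSpace Ω] (μ : Measure Ω) [IsProbabilityMeasure μ]
    (Z U εX εY : Ω → ℝ)
    (hZm : Measurable Z) (hUm : Measurable U) (hεXm : Measurable εX) (hεYm : Measurable εY)
    (hindep : iIndepFun ![Z, U, εX, εY] μ)
    (hZ1 : μ {ω | Z ω = 1} = 1/2) (hZ0 : μ {ω | Z ω = 0} = 1/2)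
    (hU : Measure.map U μ = gaussianReal 0 1) :
    IndepFun Z (fun ω => (2 * Z ω * U ω + εX ω) - U ω + εY ω) μ := by
  set S : Ω → ℝ := fun ω => εX ω + εY ω
  have hmeas : ∀ i, Measurable (![Z, U, εX, εY] i) := by simp [Fin.forall_fin_succ, *]
  have hSm : Measurable S := hεXm.add hεYm
  have hZ_US : IndepFun Z (fun ω => (U ω, S ω)) μ := by
    have hφ : Measurable fun v : ({0} : Finset (Fin 4)) → ℝ => v ⟨0, by decide⟩ :=
      measurable_pi_apply _
    have hψ : Measurable fun v : ({1, 2, 3} : Finset (Fin 4)) → ℝ =>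
        (v ⟨1, by decide⟩, v ⟨2, by decide⟩ + v ⟨3, by decide⟩) := by
      fun_prop
    exact (hindep.indepFun_finset {0} {1, 2, 3} (by decide) hmeas).comp hφ hψ
  have hUS : IndepFun U S μ := hindep.indepFun_add_right hmeas 1 2 3 (by decide) (by decide)
  have hlaw : μ.map (fun ω => (U ω, S ω)) = (gaussianReal 0 1).prod (μ.map S) := by
    rw [(indepFun_iff_map_prod_eq_prod_map_map hUm.aemeasurable hSm.aemeasurable).1 hUS, hU]
  have hZ01 : ∀ᵐ z ∂μ.map Z, z = 0 ∨ z = 1 :=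
    ae_map_eq_or_eq hZm zero_ne_one (by rw [hZ0, hZ1, ENNReal.add_halves])
  have hindepW := hZ_US.indepFun_comp_of_ae_map_eq hZm (hUm.prodMk hSm)
    (f := fun z p => (2 * z - 1) * p.1 + p.2) (by fun_prop)
    (ρ := ((gaussianReal 0 1).prod (μ.map S)).map (fun p => p.1 + p.2)) (by
      filter_upwards [hZ01] with z hz
      rw [hlaw]
      exact gaussianReal_prod_map_const_mul_add _ (by rcases hz with rfl | rfl <;> norm_num))
  convert hindepW using 2 with ω
  ring

/-- With `Z ~ Bernoulli(1/2)`, `U, ε_X, ε_Y` standard Gaussian, all jointly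
independent, and `X := 2·Z·U + ε_X`: `Z` is independent of `X − U + ε_Y`. -/
theorem statement11 {Ω : Type*} [MeasurableSpace Ω] (μ : Measure Ω) [IsProbabilityMeasure μ]
    (Z U εX εY : Ω → ℝ)
    (hZm : Measurable Z) (hUm : Measurable U) (hεXm : Measurable εX) (hεYm : Measurable εY)
    (hindep : iIndepFun ![Z, U, εX, εY] μ)
    (hZ1 : μ {ω | Z ω = 1} = 1/2) (hZ0 : μ {ω | Z ω = 0} = 1/2)
    (hU : Measure.map U μ = gaussianReal 0 1)
    (hεX : Measure.map εX μ = gaussianReal 0 1)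
    (hεY : Measure.map εY μ = gaussianReal 0 1) :
    IndepFun Z (fun ω => (2 * Z ω * U ω + εX ω) - U ω + εY ω) μ :=
  statement11_general μ Z U εX εY hZm hUm hεXm hεYm hindep hZ1 hZ0 hU
end

section
/- Let (Ω, F, P) be a probability space and A, B, G sub-sigma-algebras of F such that A and B are conditionally independent given G. Let ℓ : ℝ → ℝ be convex, let W be an integrable real random variable measurable with respect to the sigma-algebra generated by B and G, and let V be an integrable real random variable measurable with respect to the sigma-algebra generated by A and G. Assume ℓ(W − V) and ℓ(W − E[V | G]) are integrable. Then E[ℓ(W − V)] ≥ E[ℓ(W − E[V | G])]. -/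
/-!
Conditional independence of `A` and `B` given `G` makes `E[V | B ⊔ G] = E[V | G]` for every
`A ⊔ G`-measurable `V`. Both sides are compared on the π-system of rectangles `b ∩ g` generating
`B ⊔ G`, using `E[1_b | A ⊔ G] = E[1_b | G]`, which is in turn checked on the rectangles `a ∩ g`,
where it is the product formula `E[1_{a ∩ b} | G] = E[1_a | G] E[1_b | G]`. Hence
`E[W - V | B ⊔ G] = W - E[V | G]`, and conditional Jensen for `B ⊔ G` followed by the tower
property gives `E[ℓ (W - E[V | G])] ≤ E[E[ℓ (W - V) | B ⊔ G]] = E[ℓ (W - V)]`.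
-/

open MeasureTheory ProbabilityTheory MeasurableSpace Set

section Rectangles

variable {Ω : Type*}

lemma isPiSystem_image2_inter (m₁ m₂ : MeasurableSpace Ω) :
    IsPiSystem (image2 (· ∩ ·) {s | MeasurableSet[m₁] s} {t | MeasurableSet[m₂] t}) := by
  rintro _ ⟨s₁, hs₁, t₁, ht₁, rfl⟩ _ ⟨s₂, hs₂, t₂, ht₂, rfl⟩ -
  exact ⟨s₁ ∩ s₂, hs₁.inter hs₂, t₁ ∩ t₂, ht₁.inter ht₂, inter_inter_inter_comm _ _ _ _⟩

lemma generateFrom_image2_inter (m₁ m₂ : MeasurableSpace Ω) :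
    generateFrom (image2 (· ∩ ·) {s | MeasurableSet[m₁] s} {t | MeasurableSet[m₂] t}) =
      m₁ ⊔ m₂ := by
  refine le_antisymm (generateFrom_le ?_) (sup_le (fun s hs ↦ ?_) fun t ht ↦ ?_)
  · rintro _ ⟨s, hs, t, ht, rfl⟩
    exact (le_sup_left (b := m₂) s hs).inter (le_sup_right (a := m₁) t ht)
  · exact measurableSet_generateFrom ⟨s, hs, univ, .univ, inter_univ s⟩
  · exact measurableSet_generateFrom ⟨univ, .univ, t, ht, univ_inter t⟩

end Rectangles

section SetIntegral

variable {Ω E : Type*} [NormedAddCommGroup E] [NormedSpace ℝ E]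
  {m mΩ : MeasurableSpace Ω} {μ : Measure Ω}

lemma setIntegral_eq_of_isPiSystem (hm : m ≤ mΩ) {p : Set (Set Ω)} (hgen : m = generateFrom p)
    (hp : IsPiSystem p) {f g : Ω → E} (hf : Integrable f μ) (hg : Integrable g μ)
    (huniv : ∫ x, f x ∂μ = ∫ x, g x ∂μ) (heq : ∀ s ∈ p, ∫ x in s, f x ∂μ = ∫ x in s, g x ∂μ)
    {s : Set Ω} (hs : MeasurableSet[m] s) :
    ∫ x in s, f x ∂μ = ∫ x in s, g x ∂μ := by
  induction s, hs using induction_on_inter hgen hp with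
  | empty => simp
  | basic s hs => exact heq s hs
  | compl s hs ih => rw [setIntegral_compl (hm s hs) hf, setIntegral_compl (hm s hs) hg, huniv, ih]
  | iUnion s hdisj hs ih =>
    exact (hasSum_integral_iUnion (fun i ↦ hm _ (hs i)) hdisj hf.integrableOn).unique <|
      (funext ih) ▸ hasSum_integral_iUnion (fun i ↦ hm _ (hs i)) hdisj hg.integrableOn

end SetIntegral

section CondExp

variable {Ω E : Type*} [NormedAddCommGroup E] [NormedSpace ℝ E] [CompleteSpace E]
  {m₁ m₂ mΩ : MeasurableSpace Ω} {μ : Measure Ω} [IsFiniteMeasure μ]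

lemma ae_eq_condExp_sup_of_setIntegral_inter_eq (hm₁ : m₁ ≤ mΩ) (hm₂ : m₂ ≤ mΩ)
    {f g : Ω → E} (hf : Integrable f μ) (hg : Integrable g μ)
    (hgm : StronglyMeasurable[m₁ ⊔ m₂] g)
    (heq : ∀ s t, MeasurableSet[m₁] s → MeasurableSet[m₂] t →
      ∫ x in s ∩ t, g x ∂μ = ∫ x in s ∩ t, f x ∂μ) :
    g =ᵐ[μ] μ[f | m₁ ⊔ m₂] := by
  have hle : m₁ ⊔ m₂ ≤ mΩ := sup_le hm₁ hm₂
  refine ae_eq_condExp_of_forall_setIntegral_eq hle hf (fun _ _ _ ↦ hg.integrableOn)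
    (fun s hs _ ↦ ?_) hgm.aestronglyMeasurable
  refine setIntegral_eq_of_isPiSystem hle (generateFrom_image2_inter m₁ m₂).symm
    (isPiSystem_image2_inter m₁ m₂) hg hf ?_ ?_ hs
  · simpa using heq univ univ .univ .univ
  · rintro _ ⟨s, hs, t, ht, rfl⟩
    exact heq s t hs ht

end CondExp

section PullOut

variable {Ω : Type*} {m mΩ : MeasurableSpace Ω} {μ : Measure Ω}

lemma setIntegral_mul_condExp (hm : m ≤ mΩ) [SigmaFinite (μ.trim hm)] {h f : Ω → ℝ}
    (hh : StronglyMeasurable[m] h) (hhf : Integrable (h * f) μ) (hf : Integrable f μ)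
    {s : Set Ω} (hs : MeasurableSet[m] s) :
    ∫ x in s, h x * μ[f | m] x ∂μ = ∫ x in s, h x * f x ∂μ := by
  refine (setIntegral_congr_ae (hm s hs) ?_).trans (setIntegral_condExp hm hhf hs)
  filter_upwards [condExp_mul_of_stronglyMeasurable_left hh hhf hf] with x hx _
  exact hx.symm

lemma setIntegral_mul_condExp_indicator [IsFiniteMeasure μ] (hm : m ≤ mΩ) {h : Ω → ℝ}
    (hh : StronglyMeasurable[m] h) (hhi : Integrable h μ) {s t : Set Ω} (hs : MeasurableSet[m] s)
    (ht : MeasurableSet t) :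
    ∫ x in s, h x * (μ⟦t | m⟧) x ∂μ = ∫ x in t ∩ s, h x ∂μ := by
  have hmul : h * t.indicator (fun _ ↦ 1) = t.indicator h := by
    ext x
    by_cases hx : x ∈ t <;> simp [hx]
  rw [setIntegral_mul_condExp hm hh (hmul ▸ hhi.indicator ht)
    ((integrable_const 1).indicator ht) hs, inter_comm, ← setIntegral_indicator ht]
  exact congrArg _ hmul

lemma condExp_indicator_mem_Icc [IsFiniteMeasure μ] (hm : m ≤ mΩ) {s : Set Ω}
    (hs : MeasurableSet s) :
    ∀ᵐ x ∂μ, (μ⟦s | m⟧) x ∈ Icc 0 1 :=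
  (convex_Icc 0 1).condExp_mem hm ((integrable_const 1).indicator hs) isClosed_Icc
    (ae_of_all _ fun x ↦ by by_cases hx : x ∈ s <;> simp [hx])

end PullOut

namespace ProbabilityTheory

variable {Ω : Type*} {A B G mΩ : MeasurableSpace Ω} [StandardBorelSpace Ω] {μ : Measure Ω}
  [IsFiniteMeasure μ]

lemma CondIndep.condExp_indicator_sup_left (hA : A ≤ mΩ) (hB : B ≤ mΩ) (hG : G ≤ mΩ)
    (hCI : CondIndep G A B hG μ) {b : Set Ω} (hb : MeasurableSet[B] b) :
    μ⟦b | G⟧ =ᵐ[μ] μ⟦b | A ⊔ G⟧ := by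
  have hbΩ := hB b hb
  refine ae_eq_condExp_sup_of_setIntegral_inter_eq hA hG ((integrable_const 1).indicator hbΩ)
    integrable_condExp (stronglyMeasurable_condExp.mono le_sup_right) fun a g ha hg ↦ ?_
  have haΩ := hA a ha
  have hprod := (condIndep_iff G A B hG hA hB μ).1 hCI a b ha hb
  calc ∫ x in a ∩ g, (μ⟦b | G⟧) x ∂μ
      = ∫ x in g, (μ⟦b | G⟧) x * (μ⟦a | G⟧) x ∂μ :=
        (setIntegral_mul_condExp_indicator hG stronglyMeasurable_condExp integrable_condExp hg
          haΩ).symm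
    _ = ∫ x in g, (μ⟦a ∩ b | G⟧) x ∂μ := by
        refine setIntegral_congr_ae (hG g hg) ?_
        filter_upwards [hprod] with x hx _
        rw [hx, Pi.mul_apply, mul_comm]
    _ = ∫ x in g ∩ (a ∩ b), (1 : ℝ) ∂μ := by
        rw [setIntegral_condExp hG ((integrable_const 1).indicator (haΩ.inter hbΩ)) hg,
          setIntegral_indicator (haΩ.inter hbΩ)]
    _ = ∫ x in a ∩ g, b.indicator (fun _ ↦ (1 : ℝ)) x ∂μ := by
        rw [setIntegral_indicator hbΩ, inter_left_comm, inter_assoc]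

lemma CondIndep.condExp_sup_right (hA : A ≤ mΩ) (hB : B ≤ mΩ) (hG : G ≤ mΩ)
    (hCI : CondIndep G A B hG μ) {V : Ω → ℝ} (hVm : StronglyMeasurable[A ⊔ G] V)
    (hVi : Integrable V μ) :
    μ[V | G] =ᵐ[μ] μ[V | B ⊔ G] := by
  refine ae_eq_condExp_sup_of_setIntegral_inter_eq hB hG hVi integrable_condExp
    (stronglyMeasurable_condExp.mono le_sup_right) fun b g hb hg ↦ ?_
  have hbΩ := hB b hb
  have hbV : Integrable (μ⟦b | G⟧ * V) μ :=
    hVi.bdd_mul (c := 1) integrable_condExp.aestronglyMeasurable <| by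
      filter_upwards [condExp_indicator_mem_Icc hG hbΩ] with x hx
      rw [Real.norm_eq_abs, abs_le]
      exact ⟨by linarith [hx.1], hx.2⟩
  calc ∫ x in b ∩ g, (μ[V | G]) x ∂μ
      = ∫ x in g, (μ[V | G]) x * (μ⟦b | G⟧) x ∂μ :=
        (setIntegral_mul_condExp_indicator hG stronglyMeasurable_condExp integrable_condExp hg
          hbΩ).symm
    _ = ∫ x in g, (μ⟦b | G⟧) x * V x ∂μ := by
        simp_rw [mul_comm _ ((μ⟦b | G⟧) _)]
        exact setIntegral_mul_condExp hG stronglyMeasurable_condExp hbV hVi hg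
    _ = ∫ x in g, V x * (μ⟦b | A ⊔ G⟧) x ∂μ := by
        refine setIntegral_congr_ae (hG g hg) ?_
        filter_upwards [hCI.condExp_indicator_sup_left hA hB hG hb] with x hx _
        rw [hx, mul_comm]
    _ = ∫ x in b ∩ g, V x ∂μ :=
        setIntegral_mul_condExp_indicator (sup_le hA hG) hVm hVi (le_sup_right (a := A) g hg) hbΩ

end ProbabilityTheory

/-- If the σ-algebras `A` and `B` are conditionally independent given `G`, `ℓ` is
convex, `W` is `B ⊔ G`-measurable and integrable, `V` is `A ⊔ G`-measurable and integrable,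
and `ℓ(W − V)`, `ℓ(W − E[V|G])` are integrable, then
`E[ℓ(W − V)] ≥ E[ℓ(W − E[V|G])]`. -/
theorem statement14 {Ω : Type*} {mΩ : MeasurableSpace Ω} [StandardBorelSpace Ω]
    (μ : Measure Ω) [IsProbabilityMeasure μ]
    (A B G : MeasurableSpace Ω) (hA : A ≤ mΩ) (hB : B ≤ mΩ) (hG : G ≤ mΩ)
    (hCI : CondIndep G A B hG μ)
    (ℓ : ℝ → ℝ) (hℓ : ConvexOn ℝ Set.univ ℓ)
    (W V : Ω → ℝ)
    (hWmeas : Measurable[B ⊔ G] W) (hWint : Integrable W μ)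
    (hVmeas : Measurable[A ⊔ G] V) (hVint : Integrable V μ)
    (hint1 : Integrable (fun ω => ℓ (W ω - V ω)) μ)
    (hint2 : Integrable (fun ω => ℓ (W ω - (μ[V|G]) ω)) μ) :
    ∫ ω, ℓ (W ω - (μ[V|G]) ω) ∂μ ≤ ∫ ω, ℓ (W ω - V ω) ∂μ := by
  have hBG : B ⊔ G ≤ mΩ := sup_le hB hG
  have hproj : μ[W - V | B ⊔ G] =ᵐ[μ] W - μ[V | G] := by
    filter_upwards [condExp_sub hWint hVint (B ⊔ G),
      hCI.condExp_sup_right hA hB hG hVmeas.stronglyMeasurable hVint] with ω hsub hV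
    rw [hsub, Pi.sub_apply, condExp_of_stronglyMeasurable hBG hWmeas.stronglyMeasurable hWint,
      Pi.sub_apply, hV]
  have hjensen : ℓ ∘ μ[W - V | B ⊔ G] ≤ᵐ[μ] μ[ℓ ∘ (W - V) | B ⊔ G] :=
    hℓ.map_condExp_le_univ hBG
      (continuousOn_univ.1 (hℓ.continuousOn isOpen_univ)).lowerSemicontinuous
      (hWint.sub hVint) hint1
  calc ∫ ω, ℓ (W ω - (μ[V|G]) ω) ∂μ
      ≤ ∫ ω, (μ[ℓ ∘ (W - V) | B ⊔ G]) ω ∂μ := by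
        refine integral_mono_ae hint2 integrable_condExp ?_
        filter_upwards [hjensen, hproj] with ω hω hprojω
        simpa [hprojω] using hω
    _ = ∫ ω, ℓ (W ω - V ω) ∂μ := integral_condExp hBG
end

section
/- Let Θ ⊆ ℝ^p be nonempty and compact, θ⁰ ∈ Θ, and L > 0. Let H : Θ → ℝ be L-Lipschitz with θ⁰ its unique minimizer (H(θ⁰) < H(θ) for all θ ∈ Θ with θ ≠ θ⁰). Let (Ω, F, P) be a probability space and for each n let Ĥ_n : Ω × Θ → ℝ be such that θ ↦ Ĥ_n(ω, θ) is L-Lipschitz for every ω, ω ↦ Ĥ_n(ω, θ) is measurable for every θ, and for every θ ∈ Θ, Ĥ_n(·, θ) → H(θ) in probability as n → ∞. Let θ̂_n : Ω → Θ be measurable with Ĥ_n(ω, θ̂_n(ω)) = min_{θ ∈ Θ} Ĥ_n(ω, θ) for all ω. Then θ̂_n → θ⁰ in probability, i.e., for every ε > 0, P(‖θ̂_n − θ⁰‖ > ε) → 0. Moreover, if φ : ℝ^d → ℝ^p is bounded, then sup_{x ∈ ℝ^d} |φ(x)ᵀθ̂_n − φ(x)ᵀθ⁰| → 0 in probability.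 -/
/-!
Since `H` is continuous on the compact set `Θ` and `θ⁰` is its unique minimizer, `H` exceeds
`H θ⁰` by some `4δ > 0` on the part of `Θ` at distance at least `ε` from `θ⁰`. Cover `Θ` by
finitely many balls of radius `δ / (L + 1)`. If a minimizer `θ̂` of `Ĥ` lies that far from
`θ⁰`, then the common Lipschitz constant of `Ĥ` and `H` forces `|Ĥ - H| > δ` at `θ⁰` or at the
centre of the ball containing `θ̂`. So `{ε < ‖θ̂_n − θ⁰‖}` lies in a union of finitely many
events whose probabilities tend to zero by pointwise convergence in probability.
-/

open MeasureTheory Filter Metric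
open scoped RealInnerProductSpace NNReal

section ArgminConsistency

variable {α : Type*} [PseudoMetricSpace α] {Θ : Set α} {θ0 : α} {H : α → ℝ}

lemma IsCompact.exists_pos_add_lt_of_le_dist (hΘ : IsCompact Θ) (hH : ContinuousOn H Θ)
    (hHmin : ∀ θ ∈ Θ, θ ≠ θ0 → H θ0 < H θ) {ε : ℝ} (hε : 0 < ε) :
    ∃ η > 0, ∀ θ ∈ Θ, ε ≤ dist θ θ0 → H θ0 + η < H θ := by
  set K := Θ ∩ {θ | ε ≤ dist θ θ0}
  have hne_of_mem : ∀ θ ∈ K, θ ≠ θ0 := by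
    rintro θ ⟨-, hθ⟩ rfl
    simp only [Set.mem_ofPred_eq, dist_self] at hθ
    linarith
  rcases K.eq_empty_or_nonempty with hK | hK
  · exact ⟨1, one_pos, fun θ hθ hdist => absurd ⟨hθ, hdist⟩ (hK ▸ Set.notMem_empty θ)⟩
  have hKcomp : IsCompact K := hΘ.inter_right (isClosed_le continuous_const (by fun_prop))
  obtain ⟨θs, hθs, hθs_min⟩ := hKcomp.exists_isMinOn hK (hH.mono Set.inter_subset_left)
  have hgap : H θ0 < H θs := hHmin θs hθs.1 (hne_of_mem θs hθs)
  refine ⟨(H θs - H θ0) / 2, by linarith, fun θ hθ hdist => ?_⟩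
  have : H θs ≤ H θ := hθs_min ⟨hθ, hdist⟩
  linarith

lemma le_add_of_approx_of_le {L : ℝ≥0} {G : α → ℝ} {θh t : α} {δ : ℝ}
    (hH : LipschitzOnWith L H Θ) (hG : LipschitzOnWith L G Θ) (hθh : θh ∈ Θ) (ht : t ∈ Θ)
    (hclose : L * dist θh t ≤ δ) (hGmin : G θh ≤ G θ0)
    (hθ0_approx : |G θ0 - H θ0| ≤ δ) (ht_approx : |G t - H t| ≤ δ) :
    H θh ≤ H θ0 + 4 * δ := by
  have hHt : |H θh - H t| ≤ δ := (hH.dist_le_mul θh hθh t ht).trans hclose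
  have hGt : |G t - G θh| ≤ δ := (hG.dist_le_mul t ht θh hθh).trans (dist_comm θh t ▸ hclose)
  rw [abs_le] at hHt hGt hθ0_approx ht_approx
  calc H θh ≤ H t + δ := by linarith
    _ ≤ G t + 2 * δ := by linarith
    _ ≤ G θh + 3 * δ := by linarith
    _ ≤ G θ0 + 3 * δ := by linarith
    _ ≤ H θ0 + 4 * δ := by linarith

end ArgminConsistency

lemma tendsto_measure_of_subset_biUnion {Ω ι κ : Type*} [MeasurableSpace Ω] {μ : Measure Ω}
    {l : Filter κ} {s : κ → Set Ω} {A : ι → κ → Set Ω} (T : Finset ι)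
    (hsub : ∀ n, s n ⊆ ⋃ i ∈ T, A i n) (hA : ∀ i ∈ T, Tendsto (fun n => μ (A i n)) l (nhds 0)) :
    Tendsto (fun n => μ (s n)) l (nhds 0) := by
  have hsum : Tendsto (fun n => ∑ i ∈ T, μ (A i n)) l (nhds 0) := by
    simpa using tendsto_finsetSum T hA
  exact tendsto_of_tendsto_of_tendsto_of_le_of_le tendsto_const_nhds hsum (fun _ => zero_le)
    fun n => (measure_mono (hsub n)).trans (measure_biUnion_finset_le T _)

theorem tendsto_measure_lt_dist_of_isMinOn {α Ω : Type*} [PseudoMetricSpace α]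
    [MeasurableSpace Ω] (μ : Measure Ω) {Θ : Set α} (hΘ : IsCompact Θ) {θ0 : α} (hθ0 : θ0 ∈ Θ)
    {L : ℝ≥0} {H : α → ℝ} (hHlip : LipschitzOnWith L H Θ)
    (hHmin : ∀ θ ∈ Θ, θ ≠ θ0 → H θ0 < H θ) (Hn : ℕ → Ω → α → ℝ)
    (hHnlip : ∀ n ω, LipschitzOnWith L (Hn n ω) Θ)
    (hHnconv : ∀ θ ∈ Θ, ∀ ε > (0 : ℝ),
      Tendsto (fun n => μ {ω | ε < |Hn n ω θ - H θ|}) atTop (nhds 0))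
    (θhat : ℕ → Ω → α) (hθhatmem : ∀ n ω, θhat n ω ∈ Θ)
    (hθhatmin : ∀ n ω, IsMinOn (Hn n ω) Θ (θhat n ω)) {ε : ℝ} (hε : 0 < ε) :
    Tendsto (fun n => μ {ω | ε < dist (θhat n ω) θ0}) atTop (nhds 0) := by
  classical
  obtain ⟨η, hη, hgap⟩ := hΘ.exists_pos_add_lt_of_le_dist hHlip.continuousOn hHmin hε
  set δ := η / 4
  have hδ : 0 < δ := by positivity
  have hr : 0 < δ / (L + 1) := by positivity
  have hLr : (L : ℝ) * (δ / (L + 1)) ≤ δ := by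
    rw [mul_div_assoc', div_le_iff₀ (by positivity)]
    nlinarith
  obtain ⟨T, hTΘ, hcover⟩ :=
    hΘ.elim_nhds_subcover (fun x => ball x (δ / (L + 1))) fun x _ => ball_mem_nhds x hr
  refine tendsto_measure_of_subset_biUnion (insert θ0 T)
    (A := fun t n => {ω | δ < |Hn n ω t - H t|}) (fun n ω hω => ?_)
    fun t ht => hHnconv t (Finset.mem_insert.1 ht |>.elim (fun h => h ▸ hθ0) (hTΘ t)) δ hδ
  obtain ⟨t, ht, hdist⟩ := Set.mem_iUnion₂.1 (hcover (hθhatmem n ω))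
  have hfar : H θ0 + 4 * δ < H (θhat n ω) := by
    rw [show 4 * δ = η by ring]
    exact hgap _ (hθhatmem n ω) hω.le
  by_contra hnot
  simp only [Set.mem_iUnion, Set.mem_ofPred_eq, Finset.mem_insert, not_exists, not_lt] at hnot
  have hnear := le_add_of_approx_of_le hHlip (hHnlip n ω) (hθhatmem n ω) (hTΘ t ht)
    ((mul_le_mul_of_nonneg_left (le_of_lt hdist) L.2).trans hLr) (hθhatmin n ω hθ0)
    (hnot θ0 (Or.inl rfl)) (hnot t (Or.inr ht))
  linarith

lemma exists_pos_iSup_abs_inner_sub_le {X E : Type*} [SeminormedAddCommGroup E]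
    [InnerProductSpace ℝ E] {φ : X → E} (hφ : ∃ M, ∀ x, ‖φ x‖ ≤ M) :
    ∃ C > 0, ∀ a b : E, ⨆ x, |⟪φ x, a⟫ - ⟪φ x, b⟫| ≤ C * ‖a - b‖ := by
  obtain ⟨M, hM⟩ := hφ
  refine ⟨max M 1, by positivity, fun a b => Real.iSup_le (fun x => ?_) (by positivity)⟩
  calc |⟪φ x, a⟫ - ⟪φ x, b⟫| = |⟪φ x, a - b⟫| := by rw [inner_sub_right]
    _ ≤ ‖φ x‖ * ‖a - b‖ := abs_real_inner_le_norm _ _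
    _ ≤ max M 1 * ‖a - b‖ := by gcongr; exact (hM x).trans (le_max_left _ _)

lemma tendsto_measure_lt_of_le_mul {Ω ι : Type*} [MeasurableSpace Ω] {μ : Measure Ω}
    {l : Filter ι} {f g : ι → Ω → ℝ} {C : ℝ} (hC : 0 < C) (hfg : ∀ n ω, f n ω ≤ C * g n ω)
    (hg : ∀ ε > (0 : ℝ), Tendsto (fun n => μ {ω | ε < g n ω}) l (nhds 0)) {ε : ℝ} (hε : 0 < ε) :
    Tendsto (fun n => μ {ω | ε < f n ω}) l (nhds 0) :=
  tendsto_of_tendsto_of_tendsto_of_le_of_le tendsto_const_nhds (hg (ε / C) (by positivity))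
    (fun _ => zero_le) fun n => measure_mono fun ω (hω : ε < f n ω) => show ε / C < g n ω by
      rw [div_lt_iff₀' hC]; exact hω.trans_le (hfg n ω)

theorem statement15_general {Ω : Type*} [MeasurableSpace Ω] (μ : Measure Ω)
    {p d : ℕ} (Θ : Set (EuclideanSpace ℝ (Fin p)))
    (hΘcomp : IsCompact Θ)
    (θ0 : EuclideanSpace ℝ (Fin p)) (hθ0 : θ0 ∈ Θ)
    (L : NNReal)
    (H : EuclideanSpace ℝ (Fin p) → ℝ) (hHlip : LipschitzOnWith L H Θ)
    (hHmin : ∀ θ ∈ Θ, θ ≠ θ0 → H θ0 < H θ)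
    (Hn : ℕ → Ω → EuclideanSpace ℝ (Fin p) → ℝ)
    (hHnlip : ∀ n ω, LipschitzOnWith L (Hn n ω) Θ)
    (hHnconv : ∀ θ ∈ Θ, ∀ ε > (0 : ℝ),
      Tendsto (fun n => μ {ω | ε < |Hn n ω θ - H θ|}) atTop (nhds 0))
    (θhat : ℕ → Ω → EuclideanSpace ℝ (Fin p))
    (hθhatmem : ∀ n ω, θhat n ω ∈ Θ)
    (hθhatmin : ∀ n ω, ∀ θ ∈ Θ, Hn n ω (θhat n ω) ≤ Hn n ω θ) :
    (∀ ε > (0 : ℝ),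
      Tendsto (fun n => μ {ω | ε < ‖θhat n ω - θ0‖}) atTop (nhds 0)) ∧
    ∀ φ : (Fin d → ℝ) → EuclideanSpace ℝ (Fin p), (∃ M, ∀ x, ‖φ x‖ ≤ M) →
      ∀ ε > (0 : ℝ),
        Tendsto (fun n =>
          μ {ω | ε < ⨆ x : Fin d → ℝ, |⟪φ x, θhat n ω⟫ - ⟪φ x, θ0⟫|}) atTop (nhds 0) := by
  have hθhat : ∀ ε > (0 : ℝ),
      Tendsto (fun n => μ {ω | ε < ‖θhat n ω - θ0‖}) atTop (nhds 0) := fun ε hε => by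
    simpa only [dist_eq_norm] using tendsto_measure_lt_dist_of_isMinOn μ hΘcomp hθ0 hHlip hHmin
      Hn hHnlip hHnconv θhat hθhatmem (fun n ω => isMinOn_iff.2 (hθhatmin n ω)) hε
  refine ⟨hθhat, fun φ hφ ε hε => ?_⟩
  obtain ⟨C, hC, hle⟩ := exists_pos_iSup_abs_inner_sub_le hφ
  exact tendsto_measure_lt_of_le_mul hC (fun n ω => hle (θhat n ω) θ0) hθhat hε

/-- M-estimation consistency: if `H` is `L`-Lipschitz on the compact set `Θ` with
unique minimizer `θ⁰`, the random functions `Ĥ_n` are `L`-Lipschitz in `θ`, measurable in `ω`,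
and converge to `H` pointwise in probability, then any measurable minimizers `θ̂_n` converge to
`θ⁰` in probability; moreover for bounded `φ`, `sup_x |φ(x)ᵀθ̂_n − φ(x)ᵀθ⁰| → 0` in
probability. -/
theorem statement15 {Ω : Type*} [MeasurableSpace Ω] (μ : Measure Ω) [IsProbabilityMeasure μ]
    {p d : ℕ} (Θ : Set (EuclideanSpace ℝ (Fin p)))
    (hΘne : Θ.Nonempty) (hΘcomp : IsCompact Θ)
    (θ0 : EuclideanSpace ℝ (Fin p)) (hθ0 : θ0 ∈ Θ)
    (L : NNReal) (hL : 0 < L)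
    (H : EuclideanSpace ℝ (Fin p) → ℝ) (hHlip : LipschitzOnWith L H Θ)
    (hHmin : ∀ θ ∈ Θ, θ ≠ θ0 → H θ0 < H θ)
    (Hn : ℕ → Ω → EuclideanSpace ℝ (Fin p) → ℝ)
    (hHnlip : ∀ n ω, LipschitzOnWith L (Hn n ω) Θ)
    (hHnmeas : ∀ n θ, Measurable (fun ω => Hn n ω θ))
    (hHnconv : ∀ θ ∈ Θ, ∀ ε > (0 : ℝ),
      Tendsto (fun n => μ {ω | ε < |Hn n ω θ - H θ|}) atTop (nhds 0))
    (θhat : ℕ → Ω → EuclideanSpace ℝ (Fin p))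
    (hθhatmeas : ∀ n, Measurable (θhat n))
    (hθhatmem : ∀ n ω, θhat n ω ∈ Θ)
    (hθhatmin : ∀ n ω, ∀ θ ∈ Θ, Hn n ω (θhat n ω) ≤ Hn n ω θ) :
    (∀ ε > (0 : ℝ),
      Tendsto (fun n => μ {ω | ε < ‖θhat n ω - θ0‖}) atTop (nhds 0)) ∧
    ∀ φ : (Fin d → ℝ) → EuclideanSpace ℝ (Fin p), (∃ M, ∀ x, ‖φ x‖ ≤ M) →
      ∀ ε > (0 : ℝ),
        Tendsto (fun n =>
          μ {ω | ε < ⨆ x : Fin d → ℝ, |⟪φ x, θhat n ω⟫ - ⟪φ x, θ0⟫|}) atTop (nhds 0) :=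
  statement15_general μ Θ hΘcomp θ0 hθ0 L H hHlip hHmin Hn hHnlip hHnconv θhat hθhatmem hθhatmin
end

section
/- Let V, U, ε_W, ε_Z, ε_X, ε_Y be independent standard Gaussian random variables and set W := V + ε_W, Z := W + V + ε_Z (= 2V + ε_W + ε_Z). For (τ₁, τ₂) ∈ ℝ² define K_τ := U + ε_Y + τ₁·(Z·U + ε_X) + τ₂·W. Then E[Z²·K_τ²] = 12 + 114τ₁² + 30τ₂² and E[Z²]·E[K_τ²] = 12 + 42τ₁² + 12τ₂²; consequently, if Z is independent of K_τ then τ₁ = 0. (Hence in the conditional IV model X := Z·U + ε_X, Y := X + W + U + ε_Y, the causal coefficient of X is identifiable from the independence restriction, while it is not identifiable from any moment restriction.) -/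
/-!
Conditionally on the instrument variables `(V, ε_W, ε_Z)`, the residual
`K = (1 + τ₁ Z) U + ε_Y + τ₁ ε_X + τ₂ W` is centred at `τ₂ W` with variance
`(1 + τ₁ Z)² + 1 + τ₁²`. We integrate out `U`, `ε_Y`, `ε_X` one at a time, each time using
`E[f (a X + b)²] = E[f (a² + b²)]` for a standardized `X` independent of `f, a, b`. What is left
are moments of `Z` and `W`; linear combinations of `V, ε_W, ε_Z` are centred Gaussians, whose
moments come from the moment generating function `exp (v t² / 2)`, and `E[Z² W²]` follows by
polarization. This gives `E[Z² K²] = 12 + 114 τ₁² + 30 τ₂²` against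
`E[Z²] E[K²] = 6 (2 + 7 τ₁² + 2 τ₂²)`; independence of `Z` and `K` would make these equal,
forcing `72 τ₁² + 18 τ₂² = 0`.
-/

open MeasureTheory ProbabilityTheory Real
open scoped ENNReal NNReal

section FiniteMoments

variable {Ω : Type*} [MeasurableSpace Ω] {μ : Measure Ω}

@[fun_prop]
def HasFiniteMoments (X : Ω → ℝ) (μ : Measure Ω) : Prop := ∀ p : ℝ≥0, MemLp X p μ

namespace HasFiniteMoments

@[fun_prop]
lemma const [IsFiniteMeasure μ] (c : ℝ) : HasFiniteMoments (fun _ => c) μ :=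
  fun _ => memLp_const c

@[fun_prop]
lemma add {X Y : Ω → ℝ} (hX : HasFiniteMoments X μ) (hY : HasFiniteMoments Y μ) :
    HasFiniteMoments (fun ω => X ω + Y ω) μ :=
  fun p => (hX p).add (hY p)

@[fun_prop]
lemma sub {X Y : Ω → ℝ} (hX : HasFiniteMoments X μ) (hY : HasFiniteMoments Y μ) :
    HasFiniteMoments (fun ω => X ω - Y ω) μ :=
  fun p => (hX p).sub (hY p)

@[fun_prop]
lemma mul {X Y : Ω → ℝ} (hX : HasFiniteMoments X μ) (hY : HasFiniteMoments Y μ) :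
    HasFiniteMoments (fun ω => X ω * Y ω) μ := by
  intro p
  have : ENNReal.HolderTriple (2 * p : ℝ≥0) (2 * p : ℝ≥0) p := ⟨by
    rw [ENNReal.coe_mul, ENNReal.mul_inv (by simp) (by simp), ← two_mul, ← mul_assoc,
      ENNReal.coe_ofNat, ENNReal.mul_inv_cancel (by simp) (by simp), one_mul]⟩
  exact (hY (2 * p)).mul (hX (2 * p))

@[fun_prop]
lemma pow [IsFiniteMeasure μ] {X : Ω → ℝ} (hX : HasFiniteMoments X μ) (n : ℕ) :
    HasFiniteMoments (fun ω => X ω ^ n) μ := by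
  induction n with
  | zero => simpa using const 1
  | succ n ih => simpa [pow_succ] using ih.mul hX

lemma integrable {X : Ω → ℝ} (hX : HasFiniteMoments X μ) : Integrable X μ :=
  memLp_one_iff_integrable.1 (by simpa using hX 1)

end HasFiniteMoments

lemma ProbabilityTheory.HasLaw.hasFiniteMoments_of_gaussianReal {X : Ω → ℝ} {m : ℝ} {v : ℝ≥0}
    (hX : HasLaw X (gaussianReal m v) μ) : HasFiniteMoments X μ := fun p => by
  rw [← Function.id_comp X, ← memLp_map_measure_iff (by fun_prop) hX.aemeasurable, hX.map_eq]
  exact memLp_id_gaussianReal p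

end FiniteMoments

section GaussianMoments

lemma deriv_mul_exp_mul_sq_div_two (v : ℝ) {p p' : ℝ → ℝ} (hp : ∀ t, HasDerivAt p (p' t) t) :
    deriv (fun t => p t * rexp (v * t ^ 2 / 2)) =
      fun t => (p' t + v * t * p t) * rexp (v * t ^ 2 / 2) := by
  funext t
  have he : HasDerivAt (fun t => rexp (v * t ^ 2 / 2)) (rexp (v * t ^ 2 / 2) * (v * t)) t := by
    convert (((hasDerivAt_pow 2 t).const_mul v).div_const 2).exp using 1
    ring
  exact ((hp t).mul he).deriv.trans (by ring)

lemma integral_pow_gaussianReal_eq_iteratedDeriv (v : ℝ≥0) (n : ℕ) :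
    ∫ x, x ^ n ∂gaussianReal 0 v = iteratedDeriv n (fun t => rexp (v * t ^ 2 / 2)) 0 := by
  have h := iteratedDeriv_mgf_zero (X := id) (μ := gaussianReal 0 v) (by simp) n
  simp only [mgf_id_gaussianReal, zero_mul, zero_add] at h
  rw [h]
  rfl

lemma gaussianReal_moments (v : ℝ≥0) :
    ∫ x, x ^ 2 ∂gaussianReal 0 v = v ∧ ∫ x, x ^ 3 ∂gaussianReal 0 v = 0 ∧
      ∫ x, x ^ 4 ∂gaussianReal 0 v = 3 * v ^ 2 := by
  set e : ℝ → ℝ := fun t => rexp (v * t ^ 2 / 2)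
  have d1 : iteratedDeriv 1 e = fun t => (v * t) * e t := by
    rw [iteratedDeriv_one]
    simpa using deriv_mul_exp_mul_sq_div_two v (p := fun _ => 1) (fun t => hasDerivAt_const t 1)
  have d2 : iteratedDeriv 2 e = fun t => (v + v ^ 2 * t ^ 2) * e t := by
    rw [iteratedDeriv_succ, d1, deriv_mul_exp_mul_sq_div_two v
      (fun t => (hasDerivAt_id' t).const_mul (v : ℝ))]
    funext t; ring
  have d3 : iteratedDeriv 3 e = fun t => (3 * v ^ 2 * t + v ^ 3 * t ^ 3) * e t := by
    rw [iteratedDeriv_succ, d2, deriv_mul_exp_mul_sq_div_two v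
      (fun t => ((hasDerivAt_pow 2 t).const_mul ((v : ℝ) ^ 2)).const_add (v : ℝ))]
    funext t; push_cast; ring
  have d4 : iteratedDeriv 4 e = fun t => (3 * v ^ 2 + 6 * v ^ 3 * t ^ 2 + v ^ 4 * t ^ 4) * e t := by
    rw [iteratedDeriv_succ, d3, deriv_mul_exp_mul_sq_div_two v
      (p := fun t => 3 * v ^ 2 * t + v ^ 3 * t ^ 3)
      (fun t => ((hasDerivAt_id' t).const_mul (3 * (v : ℝ) ^ 2)).add
        ((hasDerivAt_pow 3 t).const_mul ((v : ℝ) ^ 3)))]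
    funext t; push_cast; ring
  simp only [integral_pow_gaussianReal_eq_iteratedDeriv, d2, d3, d4, e]
  norm_num

variable {Ω : Type*} [MeasurableSpace Ω] {μ : Measure Ω}

lemma ProbabilityTheory.HasLaw.moments_of_gaussianReal {X : Ω → ℝ} {v : ℝ≥0}
    (hX : HasLaw X (gaussianReal 0 v) μ) :
    ∫ ω, X ω ∂μ = 0 ∧ ∫ ω, X ω ^ 2 ∂μ = v ∧ ∫ ω, X ω ^ 3 ∂μ = 0 ∧
      ∫ ω, X ω ^ 4 ∂μ = 3 * v ^ 2 := by
  have h (n : ℕ) : ∫ ω, X ω ^ n ∂μ = ∫ x, x ^ n ∂gaussianReal 0 v :=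
    hX.integral_comp (f := fun x => x ^ n) (by fun_prop)
  refine ⟨?_, by simpa only [h] using gaussianReal_moments v⟩
  simpa [integral_id_gaussianReal] using h 1

end GaussianMoments

lemma measurable_iSup_comap {Ω ι β : Type*} [MeasurableSpace β] {g : ι → Ω → β} {S : Set ι}
    {j : ι} (hj : j ∈ S) : Measurable[⨆ i ∈ S, MeasurableSpace.comap (g i) inferInstance] (g j) :=
  Measurable.of_comap_le (le_iSup₂ (f := fun i (_ : i ∈ S) => MeasurableSpace.comap (g i) _) j hj)

section Independence

variable {Ω ι : Type*} [MeasurableSpace Ω] {μ : Measure Ω}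

lemma ProbabilityTheory.iIndepFun.indep_iSup_comap {β : Type*} [MeasurableSpace β]
    {g : ι → Ω → β} (hg : iIndepFun g μ) (hmeas : ∀ i, Measurable (g i)) {S : Set ι} {i : ι}
    (hi : i ∉ S) :
    Indep (⨆ j ∈ S, MeasurableSpace.comap (g j) inferInstance)
      (MeasurableSpace.comap (g i) inferInstance) μ := by
  simpa using indep_iSup_of_disjoint (fun j => (hmeas j).comap_le) hg.iIndep
    (S := S) (T := {i}) (by simpa using hi)

theorem integral_add_mul_mul_add_sq_of_indep [IsProbabilityMeasure μ] {m : MeasurableSpace Ω}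
    {X c f a b : Ω → ℝ} (hind : Indep m (MeasurableSpace.comap X inferInstance) μ)
    (hX : MemLp X 2 μ) (hX1 : ∫ ω, X ω ∂μ = 0) (hX2 : ∫ ω, X ω ^ 2 ∂μ = 1)
    (hf : Measurable[m] f) (ha : Measurable[m] a) (hb : Measurable[m] b)
    (hc : Integrable c μ) (hfa : Integrable (fun ω => f ω * a ω ^ 2) μ)
    (hfab : Integrable (fun ω => f ω * a ω * b ω) μ) (hfb : Integrable (fun ω => f ω * b ω ^ 2) μ) :
    ∫ ω, c ω + f ω * (a ω * X ω + b ω) ^ 2 ∂μ = ∫ ω, c ω + f ω * (a ω ^ 2 + b ω ^ 2) ∂μ := by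
  have hXσ : Measurable[MeasurableSpace.comap X inferInstance] X := comap_measurable X
  have uncorrelated {F Y : Ω → ℝ} (hFm : Measurable[m] F) (hF : Integrable F μ)
      (hYm : Measurable[MeasurableSpace.comap X inferInstance] Y) (hY : Integrable Y μ)
      (hY0 : ∫ ω, Y ω ∂μ = 0) :
      Integrable (fun ω => F ω * Y ω) μ ∧ ∫ ω, F ω * Y ω ∂μ = 0 := by
    have hFY : IndepFun F Y μ :=
      (IndepFun_iff_Indep F Y μ).2 (indep_of_indep_of_le hind hFm.comap_le hYm.comap_le)
    exact ⟨hFY.integrable_mul hF hY,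
      by simpa [hY0] using hFY.integral_mul_eq_mul_integral hF.1 hY.1⟩
  have hX2' : ∫ ω, X ω ^ 2 - 1 ∂μ = 0 := by
    rw [integral_sub hX.integrable_sq (integrable_const 1), hX2]; simp
  obtain ⟨i1, e1⟩ := uncorrelated (F := fun ω => f ω * a ω ^ 2) (Y := fun ω => X ω ^ 2 - 1)
    (by fun_prop) hfa (by fun_prop) (hX.integrable_sq.sub (integrable_const 1)) hX2'
  obtain ⟨i2, e2⟩ := uncorrelated (F := fun ω => f ω * a ω * b ω) (by fun_prop) hfab hXσ
    (hX.integrable one_le_two) hX1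
  have hrest : Integrable (fun ω => c ω + f ω * (a ω ^ 2 + b ω ^ 2)) μ := by
    refine ((hc.add hfa).add hfb).congr (.of_forall fun ω => ?_)
    simp only [Pi.add_apply]; ring
  calc ∫ ω, c ω + f ω * (a ω * X ω + b ω) ^ 2 ∂μ
      = ∫ ω, (c ω + f ω * (a ω ^ 2 + b ω ^ 2)) + (f ω * a ω ^ 2 * (X ω ^ 2 - 1)
          + 2 * (f ω * a ω * b ω * X ω)) ∂μ := by
        congr with ω; ring
    _ = ∫ ω, c ω + f ω * (a ω ^ 2 + b ω ^ 2) ∂μ := by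
        rw [integral_add hrest (i1.fun_add (i2.const_mul 2)), integral_add i1 (i2.const_mul 2),
          integral_const_mul, e1, e2]
        simp

end Independence

section StdGaussianFamily

variable {Ω ι : Type*} [MeasurableSpace Ω] {μ : Measure Ω}

structure IsStdGaussianFamily (g : ι → Ω → ℝ) (μ : Measure Ω) : Prop where
  measurable : ∀ i, Measurable (g i)
  iIndepFun : iIndepFun g μ
  hasLaw : ∀ i, HasLaw (g i) (gaussianReal 0 1) μ

namespace IsStdGaussianFamily

variable {g : ι → Ω → ℝ}

lemma hasFiniteMoments (hg : IsStdGaussianFamily g μ) (i : ι) : HasFiniteMoments (g i) μ :=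
  (hg.hasLaw i).hasFiniteMoments_of_gaussianReal

lemma memLp_two (hg : IsStdGaussianFamily g μ) (i : ι) : MemLp (g i) 2 μ :=
  hg.hasFiniteMoments i 2

lemma integral_eq_zero (hg : IsStdGaussianFamily g μ) (i : ι) : ∫ ω, g i ω ∂μ = 0 :=
  (hg.hasLaw i).moments_of_gaussianReal.1

lemma integral_sq (hg : IsStdGaussianFamily g μ) (i : ι) : ∫ ω, g i ω ^ 2 ∂μ = 1 :=
  (hg.hasLaw i).moments_of_gaussianReal.2.1.trans NNReal.coe_one

lemma hasLaw_linear_combination (hg : IsStdGaussianFamily g μ) {i j k : ι} (hij : i ≠ j)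
    (hik : i ≠ k) (hjk : j ≠ k) (a b c : ℝ) :
    HasLaw (fun ω => a * g i ω + b * g j ω + c * g k ω)
      (gaussianReal 0 ⟨a ^ 2 + b ^ 2 + c ^ 2, by positivity⟩) μ := by
  have hab : IndepFun (fun ω => a * g i ω) (fun ω => b * g j ω) μ :=
    (hg.iIndepFun.indepFun hij).comp (measurable_const_mul a) (measurable_const_mul b)
  have habc : IndepFun (fun ω => a * g i ω + b * g j ω) (fun ω => c * g k ω) μ :=
    (hg.iIndepFun.indepFun_prodMk hg.measurable i j k hik hjk).comp
      (φ := fun p : ℝ × ℝ => a * p.1 + b * p.2) (by fun_prop) (measurable_const_mul c)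
  have h := habc.hasLaw_fun_add (hab.hasLaw_fun_add (gaussianReal_const_mul (hg.hasLaw i) a)
    (gaussianReal_const_mul (hg.hasLaw j) b)) (gaussianReal_const_mul (hg.hasLaw k) c)
  rw [gaussianReal_conv_gaussianReal, gaussianReal_conv_gaussianReal] at h
  convert h using 1
  simp only [mul_zero, add_zero, mul_one]
  congr 1

end IsStdGaussianFamily

end StdGaussianFamily

section ConditionalIV

variable {Ω : Type*} [MeasurableSpace Ω] {μ : Measure Ω} {V U εW εZ εX εY W Z : Ω → ℝ}

lemma hasFiniteMoments_instrument (hg : IsStdGaussianFamily ![V, U, εW, εZ, εX, εY] μ)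
    (hW : W = fun ω => V ω + εW ω) (hZ : Z = fun ω => W ω + V ω + εZ ω) :
    HasFiniteMoments W μ ∧ HasFiniteMoments Z μ := by
  have hV : HasFiniteMoments V μ := hg.hasFiniteMoments 0
  have hεW : HasFiniteMoments εW μ := hg.hasFiniteMoments 2
  have hεZ : HasFiniteMoments εZ μ := hg.hasFiniteMoments 3
  have hWm : HasFiniteMoments W μ := by rw [hW]; fun_prop
  exact ⟨hWm, by rw [hZ]; fun_prop⟩

lemma instrument_moments [IsProbabilityMeasure μ]
    (hg : IsStdGaussianFamily ![V, U, εW, εZ, εX, εY] μ)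
    (hW : W = fun ω => V ω + εW ω) (hZ : Z = fun ω => W ω + V ω + εZ ω) :
    ∫ ω, Z ω ∂μ = 0 ∧ ∫ ω, Z ω ^ 2 ∂μ = 6 ∧ ∫ ω, Z ω ^ 3 ∂μ = 0 ∧ ∫ ω, Z ω ^ 4 ∂μ = 108 ∧
      ∫ ω, W ω ^ 2 ∂μ = 2 ∧ ∫ ω, Z ω ^ 2 * W ω ^ 2 ∂μ = 30 := by
  have lin (a b c : ℝ) {X : Ω → ℝ} (hX : ∀ ω, X ω = a * V ω + b * εW ω + c * εZ ω) :
      ∫ ω, X ω ∂μ = 0 ∧ ∫ ω, X ω ^ 2 ∂μ = a ^ 2 + b ^ 2 + c ^ 2 ∧ ∫ ω, X ω ^ 3 ∂μ = 0 ∧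
        ∫ ω, X ω ^ 4 ∂μ = 3 * (a ^ 2 + b ^ 2 + c ^ 2) ^ 2 := by
    obtain rfl : X = _ := funext hX
    exact (hg.hasLaw_linear_combination (i := 0) (j := 2) (k := 3) (by decide) (by decide)
      (by decide) a b c).moments_of_gaussianReal
  obtain ⟨hZ1, hZ2, hZ3, hZ4⟩ := lin 2 1 1 (X := Z) (fun ω => by rw [hZ, hW]; ring)
  obtain ⟨-, hW2, -, hW4⟩ := lin 1 1 0 (X := W) (fun ω => by rw [hW]; ring)
  obtain ⟨-, -, -, hS4⟩ := lin 3 2 1 (X := fun ω => Z ω + W ω) (fun ω => by rw [hZ, hW]; ring)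
  obtain ⟨-, -, -, hD4⟩ := lin 1 0 1 (X := fun ω => Z ω - W ω) (fun ω => by rw [hZ, hW]; ring)
  obtain ⟨hWm, hZm⟩ := hasFiniteMoments_instrument hg hW hZ
  refine ⟨hZ1, by rw [hZ2]; norm_num, hZ3, by rw [hZ4]; norm_num, by rw [hW2]; norm_num, ?_⟩
  calc ∫ ω, Z ω ^ 2 * W ω ^ 2 ∂μ
      = ∫ ω, ((Z ω + W ω) ^ 4 + (Z ω - W ω) ^ 4 - 2 * Z ω ^ 4 - 2 * W ω ^ 4) / 12 ∂μ := by
        congr with ω; ring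
    _ = ((∫ ω, (Z ω + W ω) ^ 4 ∂μ) + (∫ ω, (Z ω - W ω) ^ 4 ∂μ) - 2 * ∫ ω, Z ω ^ 4 ∂μ
          - 2 * ∫ ω, W ω ^ 4 ∂μ) / 12 := by
        simp (disch := exact HasFiniteMoments.integrable (by fun_prop)) only [integral_div,
          integral_sub, integral_add, integral_const_mul]
    _ = 30 := by rw [hS4, hD4, hZ4, hW4]; norm_num

lemma integral_pow_mul_residual_sq [IsProbabilityMeasure μ]
    (hg : IsStdGaussianFamily ![V, U, εW, εZ, εX, εY] μ)
    (hW : W = fun ω => V ω + εW ω) (hZ : Z = fun ω => W ω + V ω + εZ ω) (τ₁ τ₂ : ℝ) (n : ℕ) :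
    ∫ ω, Z ω ^ n * (U ω + εY ω + τ₁ * (Z ω * U ω + εX ω) + τ₂ * W ω) ^ 2 ∂μ =
      ∫ ω, Z ω ^ n * ((1 + τ₁ * Z ω) ^ 2 + 1 + τ₁ ^ 2 + τ₂ ^ 2 * W ω ^ 2) ∂μ := by
  let σ : Set (Fin 6) → MeasurableSpace Ω :=
    fun S => ⨆ j ∈ S, MeasurableSpace.comap (![V, U, εW, εZ, εX, εY] j) inferInstance
  have hσ (j : Fin 6) (S : Set (Fin 6)) (hj : j ∈ S) :
      Measurable[σ S] (![V, U, εW, εZ, εX, εY] j) :=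
    measurable_iSup_comap hj
  have hεX : ∀ S, 4 ∈ S → Measurable[σ S] εX := hσ 4
  have hεY : ∀ S, 5 ∈ S → Measurable[σ S] εY := hσ 5
  have hWσ (S : Set (Fin 6)) (h0 : 0 ∈ S) (h2 : 2 ∈ S) : Measurable[σ S] W := by
    rw [hW]; exact (hσ 0 S h0).add (hσ 2 S h2)
  have hZσ (S : Set (Fin 6)) (h0 : 0 ∈ S) (h2 : 2 ∈ S) (h3 : 3 ∈ S) : Measurable[σ S] Z := by
    rw [hZ]; exact ((hWσ S h0 h2).add (hσ 0 S h0)).add (hσ 3 S h3)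
  obtain ⟨hWm, hZm⟩ := hasFiniteMoments_instrument hg hW hZ
  have hεXm : HasFiniteMoments εX μ := hg.hasFiniteMoments 4
  have hεYm : HasFiniteMoments εY μ := hg.hasFiniteMoments 5
  have hind {S : Set (Fin 6)} {i : Fin 6} (hi : i ∉ S) :=
    hg.iIndepFun.indep_iSup_comap hg.measurable hi
  calc _ = ∫ ω, 0 + Z ω ^ n * ((1 + τ₁ * Z ω) * U ω + (εY ω + τ₁ * εX ω + τ₂ * W ω)) ^ 2 ∂μ := by
        congr with ω; ring
    _ = ∫ ω, 0 + Z ω ^ n * ((1 + τ₁ * Z ω) ^ 2 + (εY ω + τ₁ * εX ω + τ₂ * W ω) ^ 2) ∂μ :=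
        integral_add_mul_mul_add_sq_of_indep (hind (S := {0, 2, 3, 4, 5}) (i := 1) (by simp))
          (hg.memLp_two 1) (hg.integral_eq_zero 1) (hg.integral_sq 1)
          (by fun_prop (disch := simp)) (by fun_prop (disch := simp)) (by fun_prop (disch := simp))
          (integrable_const 0) (HasFiniteMoments.integrable (by fun_prop))
          (HasFiniteMoments.integrable (by fun_prop)) (HasFiniteMoments.integrable (by fun_prop))
    _ = ∫ ω, Z ω ^ n * (1 + τ₁ * Z ω) ^ 2
          + Z ω ^ n * (1 * εY ω + (τ₁ * εX ω + τ₂ * W ω)) ^ 2 ∂μ := by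
        congr with ω; ring
    _ = ∫ ω, Z ω ^ n * (1 + τ₁ * Z ω) ^ 2 + Z ω ^ n * (1 ^ 2 + (τ₁ * εX ω + τ₂ * W ω) ^ 2) ∂μ :=
        integral_add_mul_mul_add_sq_of_indep (hind (S := {0, 2, 3, 4}) (i := 5) (by simp))
          (hg.memLp_two 5) (hg.integral_eq_zero 5) (hg.integral_sq 5)
          (by fun_prop (disch := simp)) (by fun_prop (disch := simp)) (by fun_prop (disch := simp))
          (HasFiniteMoments.integrable (by fun_prop)) (HasFiniteMoments.integrable (by fun_prop))
          (HasFiniteMoments.integrable (by fun_prop)) (HasFiniteMoments.integrable (by fun_prop))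
    _ = ∫ ω, (Z ω ^ n * (1 + τ₁ * Z ω) ^ 2 + Z ω ^ n)
          + Z ω ^ n * (τ₁ * εX ω + τ₂ * W ω) ^ 2 ∂μ := by
        congr with ω; ring
    _ = ∫ ω, (Z ω ^ n * (1 + τ₁ * Z ω) ^ 2 + Z ω ^ n)
          + Z ω ^ n * (τ₁ ^ 2 + (τ₂ * W ω) ^ 2) ∂μ :=
        integral_add_mul_mul_add_sq_of_indep (hind (S := {0, 2, 3}) (i := 4) (by simp))
          (hg.memLp_two 4) (hg.integral_eq_zero 4) (hg.integral_sq 4)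
          (by fun_prop (disch := simp)) (by fun_prop (disch := simp)) (by fun_prop (disch := simp))
          (HasFiniteMoments.integrable (by fun_prop)) (HasFiniteMoments.integrable (by fun_prop))
          (HasFiniteMoments.integrable (by fun_prop)) (HasFiniteMoments.integrable (by fun_prop))
    _ = _ := by
        congr with ω; ring

lemma residual_moments [IsProbabilityMeasure μ]
    (hg : IsStdGaussianFamily ![V, U, εW, εZ, εX, εY] μ)
    (hW : W = fun ω => V ω + εW ω) (hZ : Z = fun ω => W ω + V ω + εZ ω) (τ₁ τ₂ : ℝ) :
    ∫ ω, (U ω + εY ω + τ₁ * (Z ω * U ω + εX ω) + τ₂ * W ω) ^ 2 ∂μ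
        = 2 + 7 * τ₁ ^ 2 + 2 * τ₂ ^ 2 ∧
      ∫ ω, Z ω ^ 2 * (U ω + εY ω + τ₁ * (Z ω * U ω + εX ω) + τ₂ * W ω) ^ 2 ∂μ
        = 12 + 114 * τ₁ ^ 2 + 30 * τ₂ ^ 2 := by
  obtain ⟨hZ1, hZ2, hZ3, hZ4, hW2, hZW⟩ := instrument_moments hg hW hZ
  obtain ⟨hWm, hZm⟩ := hasFiniteMoments_instrument hg hW hZ
  have h0 := integral_pow_mul_residual_sq hg hW hZ τ₁ τ₂ 0
  simp only [pow_zero, one_mul] at h0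
  constructor
  · calc _ = ∫ ω, (2 + τ₁ ^ 2) + 2 * τ₁ * Z ω + τ₁ ^ 2 * Z ω ^ 2 + τ₂ ^ 2 * W ω ^ 2 ∂μ := by
          rw [h0]; congr with ω; ring
      _ = (2 + τ₁ ^ 2) + 2 * τ₁ * (∫ ω, Z ω ∂μ) + τ₁ ^ 2 * (∫ ω, Z ω ^ 2 ∂μ)
            + τ₂ ^ 2 * ∫ ω, W ω ^ 2 ∂μ := by
          simp (disch := exact HasFiniteMoments.integrable (by fun_prop)) only [integral_add,
            integral_const_mul, integral_const, probReal_univ, smul_eq_mul, one_mul]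
      _ = _ := by rw [hZ1, hZ2, hW2]; ring
  · calc _ = ∫ ω, (2 + τ₁ ^ 2) * Z ω ^ 2 + 2 * τ₁ * Z ω ^ 3 + τ₁ ^ 2 * Z ω ^ 4
            + τ₂ ^ 2 * (Z ω ^ 2 * W ω ^ 2) ∂μ := by
          rw [integral_pow_mul_residual_sq hg hW hZ τ₁ τ₂ 2]; congr with ω; ring
      _ = (2 + τ₁ ^ 2) * (∫ ω, Z ω ^ 2 ∂μ) + 2 * τ₁ * (∫ ω, Z ω ^ 3 ∂μ)
            + τ₁ ^ 2 * (∫ ω, Z ω ^ 4 ∂μ) + τ₂ ^ 2 * ∫ ω, Z ω ^ 2 * W ω ^ 2 ∂μ := by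
          simp (disch := exact HasFiniteMoments.integrable (by fun_prop)) only [integral_add,
            integral_const_mul]
      _ = _ := by rw [hZ2, hZ3, hZ4, hZW]; ring

end ConditionalIV

/-- With `V, U, ε_W, ε_Z, ε_X, ε_Y` independent standard Gaussians,
`W := V + ε_W`, `Z := W + V + ε_Z`, and `K_τ := U + ε_Y + τ₁·(Z·U + ε_X) + τ₂·W`:
`E[Z²K_τ²] = 12 + 114τ₁² + 30τ₂²`, `E[Z²]E[K_τ²] = 12 + 42τ₁² + 12τ₂²`, and independence of
`Z` and `K_τ` forces `τ₁ = 0`. -/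
theorem statement18 {Ω : Type*} [MeasurableSpace Ω] (μ : Measure Ω) [IsProbabilityMeasure μ]
    (V U εW εZ εX εY : Ω → ℝ)
    (hVm : Measurable V) (hUm : Measurable U) (hεWm : Measurable εW)
    (hεZm : Measurable εZ) (hεXm : Measurable εX) (hεYm : Measurable εY)
    (hindep : iIndepFun ![V, U, εW, εZ, εX, εY] μ)
    (hV : Measure.map V μ = gaussianReal 0 1)
    (hU : Measure.map U μ = gaussianReal 0 1)
    (hεW : Measure.map εW μ = gaussianReal 0 1)
    (hεZ : Measure.map εZ μ = gaussianReal 0 1)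
    (hεX : Measure.map εX μ = gaussianReal 0 1)
    (hεY : Measure.map εY μ = gaussianReal 0 1)
    (W Z : Ω → ℝ)
    (hW : W = fun ω => V ω + εW ω)
    (hZ : Z = fun ω => W ω + V ω + εZ ω)
    (τ₁ τ₂ : ℝ) :
    (∫ ω, (Z ω) ^ 2 * (U ω + εY ω + τ₁ * (Z ω * U ω + εX ω) + τ₂ * W ω) ^ 2 ∂μ)
        = 12 + 114 * τ₁ ^ 2 + 30 * τ₂ ^ 2 ∧
      (∫ ω, (Z ω) ^ 2 ∂μ)
          * (∫ ω, (U ω + εY ω + τ₁ * (Z ω * U ω + εX ω) + τ₂ * W ω) ^ 2 ∂μ)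
        = 12 + 42 * τ₁ ^ 2 + 12 * τ₂ ^ 2 ∧
      (IndepFun Z (fun ω => U ω + εY ω + τ₁ * (Z ω * U ω + εX ω) + τ₂ * W ω) μ →
        τ₁ = 0) := by
  have hmeas : ∀ i, Measurable (![V, U, εW, εZ, εX, εY] i) := by
    intro i; fin_cases i <;> assumption
  have hg : IsStdGaussianFamily ![V, U, εW, εZ, εX, εY] μ :=
    ⟨hmeas, hindep, fun i => ⟨(hmeas i).aemeasurable, by fin_cases i <;> assumption⟩⟩
  obtain ⟨-, hZ2, -, -, -, -⟩ := instrument_moments hg hW hZ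
  obtain ⟨hK2, hZK⟩ := residual_moments hg hW hZ τ₁ τ₂
  refine ⟨hZK, by rw [hZ2, hK2]; ring, fun hind => ?_⟩
  have hZm : Measurable Z := by rw [hZ, hW]; fun_prop
  have hKm : Measurable (fun ω => U ω + εY ω + τ₁ * (Z ω * U ω + εX ω) + τ₂ * W ω) := by
    rw [hW]; fun_prop
  have hsq := (hind.comp (measurable_id.pow_const 2) (measurable_id.pow_const 2))
    |>.integral_mul_eq_mul_integral (hZm.pow_const 2).aestronglyMeasurable
      (hKm.pow_const 2).aestronglyMeasurable
  simp only [Pi.mul_apply, Function.comp_apply, id] at hsq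
  rw [hZK, hZ2, hK2] at hsq
  have : τ₁ ^ 2 = 0 := by nlinarith [sq_nonneg τ₁, sq_nonneg τ₂]
  exact pow_eq_zero_iff two_ne_zero |>.1 this
end

section
/- Let V, U, ε_W, ε_Z, ε_X be independent real-valued random variables with E[U] = 0 and E[ε_X] = 0, set W := V + ε_W, Z := W + V + ε_Z, and X := Z·U + ε_X, and assume Z is integrable. Then for every bounded measurable η : ℝ² → ℝ, E[η(Z, W)·X] = 0. (Hence E[X | (Z, W)] = 0 and no moment restriction based on functions of (Z, W) can identify the coefficient of X in the conditional IV model Y := X + W + U + ε_Y.) -/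
open MeasureTheory ProbabilityTheory

/-! Both `Z` and `W` are functions of `(V, ε_W, ε_Z)`, a triple independent of `U` and of `ε_X`.
Writing `η(Z, W)·X = (η(Z, W)·Z)·U + η(Z, W)·ε_X`, each summand is a product of independent
factors whose second factor is centred, so it has expectation zero. -/

namespace ProbabilityTheory

variable {Ω ι β : Type*} [MeasurableSpace Ω] {μ : Measure Ω} [MeasurableSpace β]

lemma iIndepFun.indepFun_prodMk₃ {f : ι → Ω → β} (h : iIndepFun f μ)
    (hf : ∀ i, Measurable (f i)) (i j l k : ι) (hik : i ≠ k) (hjk : j ≠ k) (hlk : l ≠ k) :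
    IndepFun (fun ω ↦ (f i ω, f j ω, f l ω)) (f k) μ := by
  classical
  have hdisj : Disjoint ({i, j, l} : Finset ι) {k} := by simp [hik.symm, hjk.symm, hlk.symm]
  have hφ : Measurable fun p : ({i, j, l} : Finset ι) → β ↦
      (p ⟨i, by simp⟩, p ⟨j, by simp⟩, p ⟨l, by simp⟩) := by fun_prop
  exact (h.indepFun_finset _ _ hdisj hf).comp hφ (measurable_pi_apply ⟨k, by simp⟩)

lemma IndepFun.integral_mul_eq_zero {Y ξ : Ω → ℝ} (h : IndepFun Y ξ μ)
    (hY : AEStronglyMeasurable Y μ) (hξ : AEStronglyMeasurable ξ μ) (hξ₀ : ∫ ω, ξ ω ∂μ = 0) :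
    ∫ ω, Y ω * ξ ω ∂μ = 0 := by
  rw [h.integral_fun_mul_eq_mul_integral hY hξ, hξ₀, mul_zero]

lemma integral_mul_mul_add_eq_zero_of_indepFun {H Z U ε : Ω → ℝ} {C : ℝ}
    (hHZ_U : IndepFun (fun ω ↦ H ω * Z ω) U μ) (hH_ε : IndepFun H ε μ)
    (hH : AEStronglyMeasurable H μ) (hH_bdd : ∀ᵐ ω ∂μ, ‖H ω‖ ≤ C) (hZ : Integrable Z μ)
    (hU : Integrable U μ) (hU₀ : ∫ ω, U ω ∂μ = 0) (hε : Integrable ε μ) (hε₀ : ∫ ω, ε ω ∂μ = 0) :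
    ∫ ω, H ω * (Z ω * U ω + ε ω) ∂μ = 0 := by
  have hHZ : Integrable (fun ω ↦ H ω * Z ω) μ := hZ.bdd_mul hH hH_bdd
  have hHZU : Integrable (fun ω ↦ H ω * Z ω * U ω) μ := hHZ_U.integrable_mul hHZ hU
  calc ∫ ω, H ω * (Z ω * U ω + ε ω) ∂μ
      = ∫ ω, H ω * Z ω * U ω + H ω * ε ω ∂μ := by congr 1 with ω; ring
    _ = 0 := by
      rw [integral_add hHZU (hε.bdd_mul hH hH_bdd), hHZ_U.integral_mul_eq_zero hHZ.1 hU.1 hU₀,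
        hH_ε.integral_mul_eq_zero hH hε.1 hε₀, add_zero]

end ProbabilityTheory

theorem statement19_general {Ω : Type*} [MeasurableSpace Ω] (μ : Measure Ω)
    (V U εW εZ εX : Ω → ℝ)
    (hVm : Measurable V) (hUm : Measurable U) (hεWm : Measurable εW)
    (hεZm : Measurable εZ) (hεXm : Measurable εX)
    (hindep : iIndepFun ![V, U, εW, εZ, εX] μ)
    (hUint : Integrable U μ) (hU : ∫ ω, U ω ∂μ = 0)
    (hεXint : Integrable εX μ) (hεX : ∫ ω, εX ω ∂μ = 0)
    (W Z X : Ω → ℝ)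
    (hW : W = fun ω => V ω + εW ω)
    (hZ : Z = fun ω => W ω + V ω + εZ ω)
    (hX : X = fun ω => Z ω * U ω + εX ω)
    (hZint : Integrable Z μ) :
    ∀ η : ℝ × ℝ → ℝ, Measurable η → (∃ C, ∀ x, |η x| ≤ C) →
      ∫ ω, η (Z ω, W ω) * X ω ∂μ = 0 := by
  rintro η hηm ⟨C, hC⟩
  have hf : ∀ i, Measurable (![V, U, εW, εZ, εX] i) := by
    intro i; fin_cases i <;> assumption
  have hindep_VWZ (φ : ℝ × ℝ × ℝ → ℝ) (hφ : Measurable φ) (k : Fin 5) (h1 : 0 ≠ k) (h2 : 2 ≠ k)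
      (h3 : 3 ≠ k) : IndepFun (fun ω ↦ φ (V ω, εW ω, εZ ω)) (![V, U, εW, εZ, εX] k) μ :=
    (hindep.indepFun_prodMk₃ hf 0 2 3 k h1 h2 h3).comp hφ measurable_id
  let g : ℝ × ℝ × ℝ → ℝ × ℝ := fun t ↦ (t.1 + t.2.1 + t.1 + t.2.2, t.1 + t.2.1)
  have hindep_U : IndepFun (fun ω ↦ η (Z ω, W ω) * Z ω) U μ := by
    have h := hindep_VWZ (fun t ↦ η (g t) * (g t).1) (by fun_prop) 1 (by decide) (by decide)
      (by decide)
    subst hZ hW; exact h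
  have hindep_εX : IndepFun (fun ω ↦ η (Z ω, W ω)) εX μ := by
    have h := hindep_VWZ (fun t ↦ η (g t)) (by fun_prop) 4 (by decide) (by decide)
      (by decide)
    subst hZ hW; exact h
  have hZWm : Measurable fun ω ↦ (Z ω, W ω) := by
    subst hZ hW; fun_prop
  subst hX
  exact integral_mul_mul_add_eq_zero_of_indepFun hindep_U hindep_εX
    (hηm.comp hZWm).aestronglyMeasurable (ae_of_all _ fun ω ↦ hC _) hZint hUint hU hεXint hεX

/-- With `V, U, ε_W, ε_Z, ε_X` independent, `E[U] = 0`, `E[ε_X] = 0`,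
`W := V + ε_W`, `Z := W + V + ε_Z`, `X := Z·U + ε_X` and `Z` integrable: for every bounded
measurable `η : ℝ² → ℝ`, `E[η(Z, W)·X] = 0`. -/
theorem statement19 {Ω : Type*} [MeasurableSpace Ω] (μ : Measure Ω) [IsProbabilityMeasure μ]
    (V U εW εZ εX : Ω → ℝ)
    (hVm : Measurable V) (hUm : Measurable U) (hεWm : Measurable εW)
    (hεZm : Measurable εZ) (hεXm : Measurable εX)
    (hindep : iIndepFun ![V, U, εW, εZ, εX] μ)
    (hUint : Integrable U μ) (hU : ∫ ω, U ω ∂μ = 0)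
    (hεXint : Integrable εX μ) (hεX : ∫ ω, εX ω ∂μ = 0)
    (W Z X : Ω → ℝ)
    (hW : W = fun ω => V ω + εW ω)
    (hZ : Z = fun ω => W ω + V ω + εZ ω)
    (hX : X = fun ω => Z ω * U ω + εX ω)
    (hZint : Integrable Z μ) :
    ∀ η : ℝ × ℝ → ℝ, Measurable η → (∃ C, ∀ x, |η x| ≤ C) →
      ∫ ω, η (Z ω, W ω) * X ω ∂μ = 0 :=
  statement19_general μ V U εW εZ εX hVm hUm hεWm hεZm hεXm hindep hUint hU hεXint hεX W Z X hW hZ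
    hX hZint
end
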